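/- arXiv:2112.10748 — 7 statements merged into one kernel-verified Lean document; each statement's English description precedes it below -/
import Mathlib

section
/- Fix x ∈ ℝ^D, ε > 0, n ∈ ℕ and K > 0, and assume the second-moment bound ∫ k(|x−y|²/ε)² dμ(y) ≤ K ε^{n/2}. Then for every bounded measurable u : ℝ^D → ℂ with ‖u‖_∞ > 0 and every δ > 0, ℙ[ | (1/N) Σ_{j=1}^N ε^{−n/2} k(|x−X_j|²/ε) u(X_j) − ∫_{ℝ^D} ε^{−n/2} k(|x−y|²/ε) u(y) dμ(y) | > δ ] ≤ 4 · exp( − N ε^{n/2} δ² / ( 4 ‖u‖_∞ ( K ‖u‖_∞ + ‖k‖_∞ δ / 3 ) ) ). -/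
/-!
The summands `ε^{-n/2} k(‖x - X_j‖²/ε) u(X_j)` are i.i.d., bounded by `ε^{-n/2} ‖k‖_∞ ‖u‖_∞`,
and their real and imaginary parts have second moment at most `ε^{-n/2} K ‖u‖_∞²`. Bernstein's
inequality at deviation `δ/√2` for each part, and a union bound over the two parts and the two
tails, give the estimate. Bernstein's inequality is the Chernoff bound combined with
`E e^{lY} ≤ exp (l E Y + l² E Y² / (2 (1 - l b / 3)))` for `|Y| ≤ b`, which follows by comparing
the tail of the exponential series with a geometric series, since `(n + 2)! ≥ 2 · 3ⁿ`.
-/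

open MeasureTheory

section

open ProbabilityTheory Real
open scoped Nat

namespace Real

lemma pow_add_two_div_factorial_le {z c : ℝ} (hz : |z| ≤ c) (n : ℕ) :
    z ^ (n + 2) / (n + 2)! ≤ z ^ 2 / 2 * (c / 3) ^ n := by
  have hc : 0 ≤ c := (abs_nonneg z).trans hz
  have hfact : (2 * 3 ^ n : ℝ) ≤ (n + 2)! := by
    rw [add_comm n 2]
    exact_mod_cast Nat.factorial_mul_pow_le_factorial (m := 2) (n := n)
  have hpow : z ^ (n + 2) ≤ z ^ 2 * c ^ n := by
    calc z ^ (n + 2) ≤ |z| ^ (n + 2) := by rw [← abs_pow]; exact le_abs_self _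
      _ = z ^ 2 * |z| ^ n := by rw [pow_add, sq_abs, mul_comm]
      _ ≤ z ^ 2 * c ^ n := by gcongr
  calc z ^ (n + 2) / (n + 2)! ≤ z ^ 2 * c ^ n / (2 * 3 ^ n) := by
        gcongr
      _ = z ^ 2 / 2 * (c / 3) ^ n := by rw [div_pow]; ring

lemma exp_le_one_add_add_sq_div {z c : ℝ} (hz : |z| ≤ c) (hc : c < 3) :
    exp z ≤ 1 + z + z ^ 2 / (2 * (1 - c / 3)) := by
  have hc0 : 0 ≤ c / 3 := by linarith [(abs_nonneg z).trans hz]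
  have htail : HasSum (fun n : ℕ => z ^ (n + 2) / (n + 2)!) (exp z - 1 - z) := by
    have h := (hasSum_nat_add_iff' 2).2 (exp_eq_exp_ℝ ▸ NormedSpace.expSeries_div_hasSum_exp z)
    simpa [Finset.sum_range_succ, sub_sub] using h
  have hgeom := (hasSum_geometric_of_lt_one hc0 (by linarith)).mul_left (z ^ 2 / 2)
  have := hasSum_le (pow_add_two_div_factorial_le hz) htail hgeom
  have hrhs : z ^ 2 / 2 * (1 - c / 3)⁻¹ = z ^ 2 / (2 * (1 - c / 3)) := by
    rw [div_mul_eq_mul_div, ← div_eq_mul_inv, div_div, mul_comm]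
  linarith

end Real

variable {Ω ι : Type*} [MeasurableSpace Ω] {μ : Measure Ω}

lemma integrable_exp_mul_of_abs_le [IsFiniteMeasure μ] {Y : Ω → ℝ} (hY : Measurable Y) {b : ℝ}
    (hYb : ∀ ω, |Y ω| ≤ b) (l : ℝ) : Integrable (fun ω => exp (l * Y ω)) μ := by
  refine .of_bound (by fun_prop) (exp (|l| * b)) (ae_of_all _ fun ω => ?_)
  rw [norm_of_nonneg (exp_nonneg _), exp_le_exp]
  calc l * Y ω ≤ |l * Y ω| := le_abs_self _
    _ = |l| * |Y ω| := abs_mul _ _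
    _ ≤ |l| * b := by gcongr; exact hYb ω

variable [IsProbabilityMeasure μ] [Fintype ι]

lemma mgf_le_exp_of_abs_le {Y : Ω → ℝ} (hY : Measurable Y) {b l : ℝ}
    (hYb : ∀ ω, |Y ω| ≤ b) (hl : 0 ≤ l) (hlb : l * b < 3) :
    mgf Y μ l ≤
      exp (l * ∫ ω, Y ω ∂μ + l ^ 2 * (∫ ω, Y ω ^ 2 ∂μ) / (2 * (1 - l * b / 3))) := by
  set C := l ^ 2 / (2 * (1 - l * b / 3))
  have hYint : Integrable Y μ :=
    .of_bound hY.aestronglyMeasurable b (ae_of_all _ hYb)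
  have hY2int : Integrable (fun ω => Y ω ^ 2) μ :=
    .of_bound (by fun_prop) (b ^ 2) (ae_of_all _ fun ω => by
      rw [Real.norm_eq_abs, abs_pow]; gcongr; exact hYb ω)
  have hpt : ∀ ω, exp (l * Y ω) ≤ 1 + l * Y ω + C * Y ω ^ 2 := fun ω => by
    have hz : |l * Y ω| ≤ l * b := by rw [abs_mul, abs_of_nonneg hl]; gcongr; exact hYb ω
    convert Real.exp_le_one_add_add_sq_div hz hlb using 2
    ring
  have hlin : Integrable (fun ω => 1 + l * Y ω) μ := (integrable_const 1).add (hYint.const_mul l)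
  calc mgf Y μ l ≤ ∫ ω, (1 + l * Y ω + C * Y ω ^ 2) ∂μ :=
        integral_mono (integrable_exp_mul_of_abs_le hY hYb l) (hlin.add (hY2int.const_mul C)) hpt
    _ = 1 + (l * ∫ ω, Y ω ∂μ + C * ∫ ω, Y ω ^ 2 ∂μ) := by
        rw [integral_add hlin (hY2int.const_mul C),
          integral_add (integrable_const 1) (hYint.const_mul l), integral_const,
          integral_const_mul, integral_const_mul]
        simp [add_assoc]
    _ ≤ exp (l * ∫ ω, Y ω ∂μ + l ^ 2 * (∫ ω, Y ω ^ 2 ∂μ) / (2 * (1 - l * b / 3))) := by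
        rw [mul_div_right_comm]
        linarith [add_one_le_exp (l * ∫ ω, Y ω ∂μ + C * ∫ ω, Y ω ^ 2 ∂μ)]

theorem measureReal_sum_ge_le_bernstein
    {Y : ι → Ω → ℝ} (hY_meas : ∀ i, Measurable (Y i)) (hY_indep : iIndepFun Y μ)
    {b m v t : ℝ} (hb : 0 ≤ b) (hYb : ∀ i ω, |Y i ω| ≤ b) (hm : ∀ i, ∫ ω, Y i ω ∂μ = m)
    (hv : 0 < v) (hYv : ∀ i, ∫ ω, Y i ω ^ 2 ∂μ ≤ v) (ht : 0 ≤ t) :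
    μ.real {ω | Fintype.card ι * (m + t) ≤ ∑ i, Y i ω} ≤
      exp (-(Fintype.card ι * t ^ 2) / (2 * (v + b * t / 3))) := by
  set s := v + b * t / 3 with hs_def
  have hs : 0 < s := by positivity
  set l := t / s
  have hl : 0 ≤ l := by positivity
  have hls : l * s = t := div_mul_cancel₀ t hs.ne'
  have hlb' : 1 - l * b / 3 = v / s := by
    rw [eq_div_iff hs.ne']
    linear_combination (-b / 3) * hls + hs_def
  have hlb : l * b < 3 := by linarith [div_pos hv hs]
  have hmgf : ∀ i, mgf (Y i) μ l ≤ exp (l * m + t ^ 2 / (2 * s)) := fun i => by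
    refine (mgf_le_exp_of_abs_le (hY_meas i) (hYb i) hl hlb).trans ?_
    have hvar : l ^ 2 * v / (2 * (1 - l * b / 3)) = t ^ 2 / (2 * s) := by
      rw [hlb', ← hls]
      field_simp
    rw [hm i, ← hvar]
    gcongr
    · rw [hlb']; positivity
    · exact hYv i
  have hint := hY_indep.integrable_exp_mul_sum hY_meas (s := Finset.univ)
    fun i _ => integrable_exp_mul_of_abs_le (hY_meas i) (hYb i) l
  calc μ.real {ω | Fintype.card ι * (m + t) ≤ ∑ i, Y i ω}
      ≤ exp (-l * (Fintype.card ι * (m + t))) * mgf (∑ i, Y i) μ l := by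
        simpa [Finset.sum_apply] using measure_ge_le_exp_mul_mgf _ hl hint
    _ ≤ exp (-l * (Fintype.card ι * (m + t))) * exp (l * m + t ^ 2 / (2 * s)) ^ Fintype.card ι := by
        rw [hY_indep.mgf_sum hY_meas, ← Finset.card_univ, ← Finset.prod_const]
        gcongr with i
        · exact fun i _ => mgf_nonneg
        · exact hmgf i
    _ = exp (-(Fintype.card ι * t ^ 2) / (2 * s)) := by
        rw [← exp_nat_mul, ← exp_add]
        congr 1
        field_simp
        linear_combination (-2 * Fintype.card ι * t) * hls

theorem measureReal_abs_mean_sub_ge_le_bernstein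
    {Y : ι → Ω → ℝ} (hY_meas : ∀ i, Measurable (Y i)) (hY_indep : iIndepFun Y μ)
    {b m v t : ℝ} (hb : 0 ≤ b) (hYb : ∀ i ω, |Y i ω| ≤ b) (hm : ∀ i, ∫ ω, Y i ω ∂μ = m)
    (hv : 0 < v) (hYv : ∀ i, ∫ ω, Y i ω ^ 2 ∂μ ≤ v) (ht : 0 ≤ t) :
    μ.real {ω | t ≤ |(Fintype.card ι : ℝ)⁻¹ * ∑ i, Y i ω - m|} ≤
      2 * exp (-(Fintype.card ι * t ^ 2) / (2 * (v + b * t / 3))) := by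
  rcases (Fintype.card ι).eq_zero_or_pos with hι | hι
  · calc μ.real _ ≤ 1 := measureReal_le_one
      _ ≤ _ := by simp [hι]
  have hN : (0 : ℝ) < Fintype.card ι := Nat.cast_pos.2 hι
  have hup := measureReal_sum_ge_le_bernstein hY_meas hY_indep hb hYb hm hv hYv ht
  have hdown := measureReal_sum_ge_le_bernstein (Y := fun i ω => -Y i ω) (m := -m)
    (fun i => (hY_meas i).neg) (hY_indep.comp (fun _ => Neg.neg) fun _ => measurable_neg) hb
    (fun i ω => by simpa using hYb i ω) (fun i => by simp [integral_neg, hm i]) hv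
    (fun i => by simpa using hYv i) ht
  calc μ.real {ω | t ≤ |(Fintype.card ι : ℝ)⁻¹ * ∑ i, Y i ω - m|}
      ≤ μ.real ({ω | Fintype.card ι * (m + t) ≤ ∑ i, Y i ω} ∪
          {ω | Fintype.card ι * (-m + t) ≤ ∑ i, -Y i ω}) := by
        refine measureReal_mono fun ω hω => ?_
        rw [Set.mem_ofPred_eq, inv_mul_eq_div, le_abs] at hω
        rw [Set.mem_union, Set.mem_ofPred_eq, Set.mem_ofPred_eq, Finset.sum_neg_distrib]
        rcases hω with h | h
        · have := mul_le_mul_of_nonneg_right h hN.le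
          rw [sub_mul, div_mul_cancel₀ _ hN.ne'] at this
          left; linarith
        · have := mul_le_mul_of_nonneg_right h hN.le
          rw [neg_sub, sub_mul, div_mul_cancel₀ _ hN.ne'] at this
          right; linarith
    _ ≤ _ := measureReal_union_le _ _
    _ ≤ _ := by linarith

theorem measureReal_abs_mean_comp_sub_integral_ge_le_bernstein {E : Type*} [MeasurableSpace E]
    {ν : Measure E} {X : ι → Ω → E} (hX_meas : ∀ i, Measurable (X i))
    (hX_indep : iIndepFun X μ) (hX_law : ∀ i, μ.map (X i) = ν) {g : E → ℝ} (hg : Measurable g)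
    {b v t : ℝ} (hb : 0 ≤ b) (hgb : ∀ y, |g y| ≤ b) (hv : 0 < v) (hgv : ∫ y, g y ^ 2 ∂ν ≤ v)
    (ht : 0 ≤ t) :
    μ.real {ω | t ≤ |(Fintype.card ι : ℝ)⁻¹ * ∑ i, g (X i ω) - ∫ y, g y ∂ν|} ≤
      2 * exp (-(Fintype.card ι * t ^ 2) / (2 * (v + b * t / 3))) := by
  have hmap : ∀ i {f : E → ℝ}, Measurable f → ∫ ω, f (X i ω) ∂μ = ∫ y, f y ∂ν := fun i f hf => by
    rw [← hX_law i, integral_map (hX_meas i).aemeasurable hf.aestronglyMeasurable]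
  exact measureReal_abs_mean_sub_ge_le_bernstein (Y := fun i => g ∘ X i)
    (fun i => hg.comp (hX_meas i)) (hX_indep.comp (fun _ => g) fun _ => hg) hb (fun i ω => hgb _)
    (fun i => hmap i hg) hv (fun i => (hmap i (hg.pow_const 2)).trans_le hgv) ht

theorem measureReal_norm_mean_sub_integral_gt_le_bernstein {E : Type*} [MeasurableSpace E]
    {ν : Measure E} [IsFiniteMeasure ν] {X : ι → Ω → E} (hX_meas : ∀ i, Measurable (X i))
    (hX_indep : iIndepFun X μ) (hX_law : ∀ i, μ.map (X i) = ν) {W : E → ℂ} (hW : Measurable W)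
    {b v δ : ℝ} (hb : 0 ≤ b) (hWb : ∀ y, ‖W y‖ ≤ b) (hv : 0 < v) (hWv : ∫ y, ‖W y‖ ^ 2 ∂ν ≤ v)
    (hδ : 0 < δ) :
    μ.real {ω | δ < ‖(1 / (Fintype.card ι : ℂ)) * ∑ i, W (X i ω) - ∫ y, W y ∂ν‖} ≤
      4 * exp (-(Fintype.card ι * δ ^ 2) / (4 * (v + b * δ / 3))) := by
  set t := δ / √2
  have ht : 0 ≤ t := by positivity
  have htδ : t ≤ δ := div_le_self hδ.le (Real.one_le_sqrt.2 one_le_two)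
  have hWint : Integrable W ν := .of_bound hW.aestronglyMeasurable b (ae_of_all _ hWb)
  have hsq : ∀ g : E → ℝ, Measurable g → (∀ y, |g y| ≤ ‖W y‖) → ∫ y, g y ^ 2 ∂ν ≤ v :=
    fun g hg hgW => by
      refine (integral_mono (.of_bound (by fun_prop) (b ^ 2) (ae_of_all _ fun y => ?_))
        (.of_bound (by fun_prop) (b ^ 2) (ae_of_all _ fun y => ?_)) fun y => ?_).trans hWv
      · rw [norm_pow, Real.norm_eq_abs]; gcongr; exact (hgW y).trans (hWb y)
      · rw [norm_pow, norm_norm]; gcongr; exact hWb y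
      · rw [← sq_abs]; gcongr; exact hgW y
  have hre := measureReal_abs_mean_comp_sub_integral_ge_le_bernstein (g := fun y => (W y).re)
    hX_meas hX_indep hX_law (Complex.measurable_re.comp hW) hb
    (fun y => (Complex.abs_re_le_norm _).trans (hWb y)) hv
    (hsq _ (Complex.measurable_re.comp hW) fun y => Complex.abs_re_le_norm _) ht
  have him := measureReal_abs_mean_comp_sub_integral_ge_le_bernstein (g := fun y => (W y).im)
    hX_meas hX_indep hX_law (Complex.measurable_im.comp hW) hb
    (fun y => (Complex.abs_im_le_norm _).trans (hWb y)) hv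
    (hsq _ (Complex.measurable_im.comp hW) fun y => Complex.abs_im_le_norm _) ht
  have hexp : 2 * exp (-(Fintype.card ι * t ^ 2) / (2 * (v + b * t / 3))) ≤
      2 * exp (-(Fintype.card ι * δ ^ 2) / (4 * (v + b * δ / 3))) := by
    have ht2 : t ^ 2 = δ ^ 2 / 2 := by rw [div_pow, Real.sq_sqrt zero_le_two]
    calc 2 * exp (-(Fintype.card ι * t ^ 2) / (2 * (v + b * t / 3)))
        = 2 * exp (-(Fintype.card ι * δ ^ 2 / (4 * (v + b * t / 3)))) := by
          rw [ht2]; congr 2; field_simp; ring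
      _ ≤ 2 * exp (-(Fintype.card ι * δ ^ 2 / (4 * (v + b * δ / 3)))) := by gcongr
      _ = _ := by rw [neg_div]
  have hint_re := integral_re hWint
  have hint_im := integral_im hWint
  simp only [RCLike.re_to_complex, RCLike.im_to_complex] at hint_re hint_im
  calc μ.real {ω | δ < ‖(1 / (Fintype.card ι : ℂ)) * ∑ i, W (X i ω) - ∫ y, W y ∂ν‖}
      ≤ μ.real ({ω | t ≤ |(Fintype.card ι : ℝ)⁻¹ * ∑ i, (W (X i ω)).re - ∫ y, (W y).re ∂ν|} ∪
          {ω | t ≤ |(Fintype.card ι : ℝ)⁻¹ * ∑ i, (W (X i ω)).im - ∫ y, (W y).im ∂ν|}) := by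
        refine measureReal_mono fun ω hω => ?_
        have hmax := hω.trans_le (Complex.norm_le_sqrt_two_mul_max _)
        rw [← div_lt_iff₀' (by positivity), lt_max_iff] at hmax
        simp only [one_div_mul_eq_div, Complex.sub_re, Complex.sub_im, Complex.div_natCast_re,
          Complex.div_natCast_im, Complex.re_sum, Complex.im_sum, ← hint_re, ← hint_im] at hmax
        simp only [Set.mem_union, Set.mem_ofPred_eq, inv_mul_eq_div]
        rcases hmax with h | h
        · exact .inl h.le
        · exact .inr h.le
    _ ≤ _ := measureReal_union_le _ _
    _ ≤ _ := by linarith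

lemma integral_norm_ofReal_mul_sq_le {E : Type*} [MeasurableSpace E] {ν : Measure E}
    [IsFiniteMeasure ν] {c : E → ℝ} {u : E → ℂ} (hc : Measurable c)
    {C M : ℝ} (hcC : ∀ y, |c y| ≤ C) (huM : ∀ y, ‖u y‖ ≤ M) :
    ∫ y, ‖(c y : ℂ) * u y‖ ^ 2 ∂ν ≤ M ^ 2 * ∫ y, c y ^ 2 ∂ν := by
  rw [← integral_const_mul]
  refine integral_mono_of_nonneg (ae_of_all _ fun y => by positivity) ?_ (ae_of_all _ fun y => ?_)
  · exact (Integrable.of_bound (by fun_prop) (C ^ 2) (ae_of_all _ fun y => by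
      rw [norm_pow, Real.norm_eq_abs]; gcongr; exact hcC y)).const_mul _
  · dsimp only
    rw [norm_mul, Complex.norm_real, Real.norm_eq_abs, mul_pow, sq_abs, mul_comm]
    gcongr
    exact huM y

end

theorem kernel_sum_consistency_general
    {Ω : Type*} [MeasurableSpace Ω] (ℙ : Measure Ω) [IsProbabilityMeasure ℙ]
    {D : ℕ} (μ : Measure (EuclideanSpace ℝ (Fin D))) [IsProbabilityMeasure μ]
    (N : ℕ)
    (X : Fin N → Ω → EuclideanSpace ℝ (Fin D))
    (hX_meas : ∀ j, Measurable (X j))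
    (hX_indep : ProbabilityTheory.iIndepFun X ℙ)
    (hX_law : ∀ j, Measure.map (X j) ℙ = μ)
    (k : ℝ → ℝ) (hk_meas : Measurable k) (hk_nonneg : ∀ t, 0 ≤ k t)
    (hk_bdd : BddAbove (Set.range k))
    (x : EuclideanSpace ℝ (Fin D)) (ε : ℝ) (hε : 0 < ε) (n : ℕ)
    (K : ℝ) (hK : 0 < K)
    (hmom : ∫ y, (k (‖x - y‖ ^ 2 / ε)) ^ 2 ∂μ ≤ K * ε ^ ((n : ℝ) / 2))
    (u : EuclideanSpace ℝ (Fin D) → ℂ) (hu_meas : Measurable u)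
    (hu_bdd : BddAbove (Set.range fun y => ‖u y‖))
    (hu_pos : 0 < ⨆ y, ‖u y‖)
    (δ : ℝ) (hδ : 0 < δ) :
    ℙ {ω | δ <
        ‖(1 / (N : ℂ)) * ∑ j, ((ε ^ (-(n : ℝ) / 2) * k (‖x - X j ω‖ ^ 2 / ε) : ℝ) : ℂ)
            * u (X j ω)
          - ∫ y, ((ε ^ (-(n : ℝ) / 2) * k (‖x - y‖ ^ 2 / ε) : ℝ) : ℂ) * u y ∂μ‖}
      ≤ ENNReal.ofReal (4 * Real.exp
          (-(N * ε ^ ((n : ℝ) / 2) * δ ^ 2) /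
            (4 * (⨆ y, ‖u y‖) * (K * (⨆ y, ‖u y‖) + (⨆ t, k t) * δ / 3)))) := by
  set Mu := ⨆ y, ‖u y‖
  set Mk := ⨆ t, k t
  set e := ε ^ ((n : ℝ) / 2)
  have he : 0 < e := Real.rpow_pos_of_pos hε _
  have hMk : 0 ≤ Mk := (hk_nonneg 0).trans (le_ciSup hk_bdd 0)
  have hr : ε ^ (-(n : ℝ) / 2) = e⁻¹ := by rw [neg_div, Real.rpow_neg hε.le]
  set c := fun y => e⁻¹ * k (‖x - y‖ ^ 2 / ε)
  have hc : Measurable c := by fun_prop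
  have hcMk : ∀ y, |c y| ≤ e⁻¹ * Mk := fun y => by
    rw [abs_of_nonneg (mul_nonneg (inv_nonneg.2 he.le) (hk_nonneg _))]
    exact mul_le_mul_of_nonneg_left (le_ciSup hk_bdd _) (inv_nonneg.2 he.le)
  have hc2 : ∫ y, c y ^ 2 ∂μ ≤ e⁻¹ * K := by
    simp only [c, mul_pow, integral_const_mul]
    calc e⁻¹ ^ 2 * ∫ y, k (‖x - y‖ ^ 2 / ε) ^ 2 ∂μ ≤ e⁻¹ ^ 2 * (K * e) :=
          mul_le_mul_of_nonneg_left hmom (by positivity)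
      _ = e⁻¹ * K := by field_simp
  have hbound := measureReal_norm_mean_sub_integral_gt_le_bernstein hX_meas hX_indep hX_law
    (W := fun y => (c y : ℂ) * u y) (b := e⁻¹ * Mk * Mu) (v := e⁻¹ * K * Mu ^ 2) (by fun_prop)
    (by positivity) (fun y => by
      rw [norm_mul, Complex.norm_real, Real.norm_eq_abs]
      exact mul_le_mul (hcMk y) (le_ciSup hu_bdd y) (norm_nonneg _) (by positivity))
    (by positivity)
    ((integral_norm_ofReal_mul_sq_le hc hcMk (le_ciSup hu_bdd)).trans
      ((mul_le_mul_of_nonneg_left hc2 (sq_nonneg Mu)).trans_eq (by ring))) hδ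
  have hexp : -((N : ℝ) * δ ^ 2) / (4 * (e⁻¹ * K * Mu ^ 2 + e⁻¹ * Mk * Mu * δ / 3)) =
      -(N * e * δ ^ 2) / (4 * Mu * (K * Mu + Mk * δ / 3)) := by
    field_simp
  simp only [Fintype.card_fin, hexp] at hbound
  simp only [hr]
  rw [← ofReal_measureReal]
  exact ENNReal.ofReal_le_ofReal hbound

/-- Bernstein-type kernel-sum consistency lemma: the empirical average of the
rescaled kernel against a bounded function concentrates around its mean. -/
theorem kernel_sum_consistency
    {Ω : Type*} [MeasurableSpace Ω] (ℙ : Measure Ω) [IsProbabilityMeasure ℙ]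
    {D : ℕ} (μ : Measure (EuclideanSpace ℝ (Fin D))) [IsProbabilityMeasure μ]
    (N : ℕ) (hN : 0 < N)
    (X : Fin N → Ω → EuclideanSpace ℝ (Fin D))
    (hX_meas : ∀ j, Measurable (X j))
    (hX_indep : ProbabilityTheory.iIndepFun X ℙ)
    (hX_law : ∀ j, Measure.map (X j) ℙ = μ)
    (k : ℝ → ℝ) (hk_meas : Measurable k) (hk_nonneg : ∀ t, 0 ≤ k t)
    (hk_bdd : BddAbove (Set.range k))
    (x : EuclideanSpace ℝ (Fin D)) (ε : ℝ) (hε : 0 < ε) (n : ℕ)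
    (K : ℝ) (hK : 0 < K)
    (hmom : ∫ y, (k (‖x - y‖ ^ 2 / ε)) ^ 2 ∂μ ≤ K * ε ^ ((n : ℝ) / 2))
    (u : EuclideanSpace ℝ (Fin D) → ℂ) (hu_meas : Measurable u)
    (hu_bdd : BddAbove (Set.range fun y => ‖u y‖))
    (hu_pos : 0 < ⨆ y, ‖u y‖)
    (δ : ℝ) (hδ : 0 < δ) :
    ℙ {ω | δ <
        ‖(1 / (N : ℂ)) * ∑ j, ((ε ^ (-(n : ℝ) / 2) * k (‖x - X j ω‖ ^ 2 / ε) : ℝ) : ℂ)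
            * u (X j ω)
          - ∫ y, ((ε ^ (-(n : ℝ) / 2) * k (‖x - y‖ ^ 2 / ε) : ℝ) : ℂ) * u y ∂μ‖}
      ≤ ENNReal.ofReal (4 * Real.exp
          (-(N * ε ^ ((n : ℝ) / 2) * δ ^ 2) /
            (4 * (⨆ y, ‖u y‖) * (K * (⨆ y, ‖u y‖) + (⨆ t, k t) * δ / 3)))) :=
  kernel_sum_consistency_general ℙ μ N X hX_meas hX_indep hX_law k hk_meas hk_nonneg hk_bdd x ε hε n
    K hK hmom u hu_meas hu_bdd hu_pos δ hδ
end

section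
/- Let ς ∈ ℝ, h ∈ (0,1], and let u, v : ℝ^D → ℂ be bounded measurable functions satisfying sup |u| ≤ h^{−ς} K̄ and ∫ |u|² dμ ≤ K₂ for constants K̄, K₂ > 0, with ‖v‖_∞ > 0. Then for every δ > 0, ℙ[ | (1/N) Σ_{j=1}^N u(X_j) · conj(v(X_j)) − ∫ u · conj(v) dμ | > δ ] ≤ 4 · exp( − N h^{ς} δ² / ( 4 ‖v‖_∞ ( h^{ς} K₂ ‖v‖_∞ + K̄ δ / 3 ) ) ). -/
/-!
The summands `u(Xⱼ) · conj v(Xⱼ)` are i.i.d., bounded by `b = h^{-ς} K̄ ‖v‖_∞` and of second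
moment at most `K₂ ‖v‖_∞²`, so the theorem is Bernstein's inequality. Comparing the exponential
series termwise with the geometric one, via `(n + 2)! ≥ 2 · 3ⁿ`, gives
`eʸ ≤ 1 + y + y² / (2 (1 - c / 3))` for `y ≤ c < 3`; hence a variable bounded above by `b` has
centred moment generating function at most `exp (l² E[Y²] / (2 (1 - l b / 3)))`, and the Chernoff
bound for the independent sum yields the tail `exp (-ε² / (2 (V + b ε / 3)))`. The complex sum is
controlled through the two signs of its real and imaginary parts at level `N δ / √2`, which costs
the factor `4`; multiplying numerator and denominator by `h^ς` gives the stated exponent.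
-/

open MeasureTheory

open scoped Nat in
theorem Nat.two_mul_three_pow_le_factorial_add_two (n : ℕ) : 2 * 3 ^ n ≤ (n + 2)! := by
  induction n with
  | zero => decide
  | succ k ih =>
    rw [show k + 1 + 2 = k + 2 + 1 from rfl, Nat.factorial_succ, pow_succ]
    nlinarith

namespace Real

open scoped Nat

theorem exp_sub_sub_one_eq_tsum (y : ℝ) :
    exp y - y - 1 = ∑' n : ℕ, y ^ (n + 2) / (n + 2)! := by
  have hs : Summable (fun n : ℕ => y ^ n / n !) := summable_pow_div_factorial y
  have he : exp y = ∑' n : ℕ, y ^ n / n ! := by rw [exp_eq_exp_ℝ, NormedSpace.exp_eq_tsum_div]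
  rw [he, hs.tsum_eq_zero_add, ((summable_nat_add_iff 1).mpr hs).tsum_eq_zero_add]
  simp only [pow_zero, Nat.factorial_zero, Nat.cast_one, div_one, zero_add, pow_one,
    Nat.factorial_one]
  ring

theorem exp_le_quadratic_of_nonpos {y : ℝ} (hy : y ≤ 0) : exp y ≤ 1 + y + y ^ 2 / 2 := by
  have hderiv (x : ℝ) : HasDerivAt (fun x => 1 + x + x ^ 2 / 2 - exp x) (1 + x - exp x) x :=
    ((((hasDerivAt_id x).const_add 1).add ((hasDerivAt_pow 2 x).div_const 2)).sub
      (hasDerivAt_exp x)).congr_deriv (by push_cast; ring)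
  have hanti : Antitone (fun x => 1 + x + x ^ 2 / 2 - exp x) :=
    antitone_of_deriv_nonpos (fun x => (hderiv x).differentiableAt) fun x => by
      rw [(hderiv x).deriv]; linarith [add_one_le_exp x]
  have := hanti hy
  simp only [exp_zero] at this
  linarith

theorem exp_sub_sub_one_le_of_le {y c : ℝ} (hyc : y ≤ c) (hc0 : 0 ≤ c) (hc3 : c < 3) :
    exp y - y - 1 ≤ y ^ 2 / (2 * (1 - c / 3)) := by
  have hq : 0 < 1 - c / 3 := by linarith
  rcases le_total y 0 with hy | hy
  · calc exp y - y - 1 ≤ y ^ 2 / 2 := by linarith [exp_le_quadratic_of_nonpos hy]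
      _ ≤ y ^ 2 / (2 * (1 - c / 3)) :=
        div_le_div_of_nonneg_left (sq_nonneg y) (by positivity) (by linarith)
  have hterm (n : ℕ) : y ^ (n + 2) / (n + 2)! ≤ y ^ 2 / 2 * (c / 3) ^ n := by
    have hfac : (2 * 3 ^ n : ℝ) ≤ (n + 2)! := by
      exact_mod_cast Nat.two_mul_three_pow_le_factorial_add_two n
    calc y ^ (n + 2) / (n + 2)! ≤ c ^ n * y ^ 2 / (2 * 3 ^ n) := by
          rw [pow_add]; gcongr
      _ = y ^ 2 / 2 * (c / 3) ^ n := by rw [div_pow]; field_simp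
  calc exp y - y - 1 = ∑' n : ℕ, y ^ (n + 2) / (n + 2)! := exp_sub_sub_one_eq_tsum y
    _ ≤ ∑' n : ℕ, y ^ 2 / 2 * (c / 3) ^ n :=
        ((summable_nat_add_iff 2).mpr (summable_pow_div_factorial y)).tsum_le_tsum hterm
          ((summable_geometric_of_lt_one (by positivity) (by linarith)).mul_left _)
    _ = y ^ 2 / (2 * (1 - c / 3)) := by
        rw [tsum_mul_left, tsum_geometric_of_lt_one (by positivity) (by linarith)]
        field_simp

end Real

namespace ProbabilityTheory

open Real

variable {Ω : Type*} [MeasurableSpace Ω] {P : Measure Ω} [IsProbabilityMeasure P]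

theorem mgf_sub_integral_le {Y : Ω → ℝ} {b l : ℝ} (hY : MemLp Y 2 P)
    (hYb : ∀ᵐ ω ∂P, Y ω ≤ b) (hb : 0 ≤ b) (hl : 0 ≤ l) (hlb : l * b < 3) :
    mgf (fun ω => Y ω - P[Y]) P l ≤ exp (l ^ 2 / (2 * (1 - l * b / 3)) * P[Y ^ 2]) := by
  set q := l ^ 2 / (2 * (1 - l * b / 3))
  have hpoint : ∀ᵐ ω ∂P, exp (l * Y ω) ≤ 1 + l * Y ω + q * Y ω ^ 2 := by
    filter_upwards [hYb] with ω hω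
    have := exp_sub_sub_one_le_of_le (mul_le_mul_of_nonneg_left hω hl) (mul_nonneg hl hb) hlb
    calc exp (l * Y ω) ≤ 1 + l * Y ω + (l * Y ω) ^ 2 / (2 * (1 - l * b / 3)) := by linarith
      _ = 1 + l * Y ω + q * Y ω ^ 2 := by ring
  have hint_exp : Integrable (fun ω => exp (l * Y ω)) P := by
    refine Integrable.mono' (integrable_const (exp (l * b)))
      (hY.aestronglyMeasurable.aemeasurable.const_mul l).exp.aestronglyMeasurable ?_
    filter_upwards [hYb] with ω hω
    rw [norm_of_nonneg (exp_pos _).le]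
    exact exp_le_exp.mpr (mul_le_mul_of_nonneg_left hω hl)
  have hlin : Integrable (fun ω => 1 + l * Y ω) P :=
    (integrable_const 1).add ((hY.integrable one_le_two).const_mul l)
  have hquad : Integrable (fun ω => q * Y ω ^ 2) P := hY.integrable_sq.const_mul q
  have hmgf : mgf Y P l ≤ exp (l * P[Y] + q * P[Y ^ 2]) :=
    calc mgf Y P l ≤ ∫ ω, (1 + l * Y ω + q * Y ω ^ 2) ∂P :=
          integral_mono_ae hint_exp (hlin.add hquad) hpoint
      _ = l * P[Y] + q * P[Y ^ 2] + 1 := by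
          rw [integral_add hlin hquad, integral_add (integrable_const 1)
            ((hY.integrable one_le_two).const_mul l), integral_const_mul, integral_const_mul]
          simp only [integral_const, probReal_univ, smul_eq_mul, one_mul, Pi.pow_apply]
          ring
      _ ≤ exp (l * P[Y] + q * P[Y ^ 2]) := add_one_le_exp _
  calc mgf (fun ω => Y ω - P[Y]) P l = mgf Y P l * exp (l * -P[Y]) := by
        simp_rw [sub_eq_add_neg]; exact mgf_add_const _
    _ ≤ exp (l * P[Y] + q * P[Y ^ 2]) * exp (l * -P[Y]) := by gcongr
    _ = exp (q * P[Y ^ 2]) := by rw [← exp_add]; ring_nf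

variable {ι : Type*} [Fintype ι]

/-- **Bernstein's inequality**; the Chernoff bound is evaluated at `l = ε / (V + b ε / 3)`. -/
theorem measureReal_sum_sub_integral_ge_le {Y : ι → Ω → ℝ} (h_indep : iIndepFun Y P)
    (hY : ∀ i, MemLp (Y i) 2 P) {b V ε : ℝ} (hb : 0 ≤ b) (hYb : ∀ i, ∀ᵐ ω ∂P, Y i ω ≤ b)
    (hV : 0 < V) (hYV : ∑ i, P[Y i ^ 2] ≤ V) (hε : 0 ≤ ε) :
    P.real {ω | ε ≤ ∑ i, (Y i ω - P[Y i])} ≤ exp (-ε ^ 2 / (2 * (V + b * ε / 3))) := by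
  set A := V + b * ε / 3
  have hA : 0 < A := by positivity
  set l := ε / A
  have hl : 0 ≤ l := by positivity
  have hq : 1 - l * b / 3 = V / A := by simp only [l, A]; field_simp; ring
  have hlb : l * b < 3 := by linarith [div_pos hV hA]
  set Z : ι → Ω → ℝ := fun i ω => Y i ω - P[Y i]
  have hZ_indep : iIndepFun Z P :=
    h_indep.comp (fun i y => y - ∫ ω, Y i ω ∂P) fun _ => measurable_id.sub_const _
  have hZ_meas (i : ι) : AEMeasurable (Z i) P :=
    (hY i).aestronglyMeasurable.aemeasurable.sub_const _
  have hZb : ∀ᵐ ω ∂P, ∀ i, Z i ω ≤ b - P[Y i] := by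
    filter_upwards [ae_all_iff.mpr hYb] with ω hω i using sub_le_sub_right (hω i) _
  have hint : Integrable (fun ω => exp (l * (∑ i, Z i) ω)) P := by
    refine Integrable.mono' (integrable_const (exp (l * ∑ i, (b - P[Y i]))))
      ((Finset.aemeasurable_sum _ fun i _ => hZ_meas i).const_mul l).exp.aestronglyMeasurable ?_
    filter_upwards [hZb] with ω hω
    rw [norm_of_nonneg (exp_pos _).le, Finset.sum_apply]
    exact exp_le_exp.mpr (mul_le_mul_of_nonneg_left (Finset.sum_le_sum fun i _ => hω i) hl)
  have hmgf : mgf (∑ i, Z i) P l ≤ exp (l ^ 2 / (2 * (1 - l * b / 3)) * V) :=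
    calc mgf (∑ i, Z i) P l = ∏ i, mgf (Z i) P l := hZ_indep.mgf_sum₀ hZ_meas _
      _ ≤ ∏ i, exp (l ^ 2 / (2 * (1 - l * b / 3)) * P[Y i ^ 2]) :=
          Finset.prod_le_prod (fun _ _ => mgf_nonneg) fun i _ =>
            mgf_sub_integral_le (hY i) (hYb i) hb hl hlb
      _ = exp (l ^ 2 / (2 * (1 - l * b / 3)) * ∑ i, P[Y i ^ 2]) := by
          rw [← exp_sum, Finset.mul_sum]
      _ ≤ exp (l ^ 2 / (2 * (1 - l * b / 3)) * V) := by
          gcongr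
          rw [hq]; positivity
  calc P.real {ω | ε ≤ ∑ i, (Y i ω - P[Y i])} = P.real {ω | ε ≤ (∑ i, Z i) ω} := by
        simp only [Finset.sum_apply, Z]
    _ ≤ exp (-l * ε) * mgf (∑ i, Z i) P l := measure_ge_le_exp_mul_mgf ε hl hint
    _ ≤ exp (-l * ε) * exp (l ^ 2 / (2 * (1 - l * b / 3)) * V) := by gcongr
    _ = exp (-ε ^ 2 / (2 * A)) := by
        rw [← exp_add, hq]
        congr 1
        simp only [l]
        field_simp
        ring

theorem measureReal_abs_sum_sub_integral_ge_le {Y : ι → Ω → ℝ} (h_indep : iIndepFun Y P)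
    (hY : ∀ i, AEStronglyMeasurable (Y i) P) {b V ε : ℝ} (hb : 0 ≤ b)
    (hYb : ∀ i, ∀ᵐ ω ∂P, |Y i ω| ≤ b) (hV : 0 < V) (hYV : ∑ i, P[Y i ^ 2] ≤ V) (hε : 0 ≤ ε) :
    P.real {ω | ε ≤ |∑ i, (Y i ω - P[Y i])|} ≤ 2 * exp (-ε ^ 2 / (2 * (V + b * ε / 3))) := by
  have hL2 (i : ι) : MemLp (Y i) 2 P := .of_bound (hY i) b (hYb i)
  have hupper := measureReal_sum_sub_integral_ge_le h_indep hL2 hb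
    (fun i => (hYb i).mono fun _ hω => (abs_le.mp hω).2) hV hYV hε
  have hlower := measureReal_sum_sub_integral_ge_le (Y := fun i ω => -Y i ω)
    (h_indep.comp (fun _ y => -y) fun _ => measurable_neg) (fun i => (hL2 i).neg) hb
    (fun i => (hYb i).mono fun _ hω => neg_le.mp (abs_le.mp hω).1) hV
    (by simpa only [Pi.pow_apply, neg_sq] using hYV) hε
  calc P.real {ω | ε ≤ |∑ i, (Y i ω - P[Y i])|}
      ≤ P.real ({ω | ε ≤ ∑ i, (Y i ω - P[Y i])} ∪
          {ω | ε ≤ ∑ i, (-Y i ω - ∫ ω', -Y i ω' ∂P)}) := by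
        refine measureReal_mono (fun ω hω => ?_)
        have hneg : ∑ i, (-Y i ω - ∫ ω', -Y i ω' ∂P) = -∑ i, (Y i ω - P[Y i]) := by
          simp only [integral_neg, ← Finset.sum_neg_distrib, neg_sub, sub_neg_eq_add]
          exact Finset.sum_congr rfl fun _ _ => by ring
        rw [Set.mem_union, Set.mem_ofPred_eq, Set.mem_ofPred_eq, hneg]
        exact le_abs.mp hω
    _ ≤ _ := measureReal_union_le _ _
    _ ≤ _ := by linarith

theorem measureReal_abs_map_sum_sub_integral_ge_le {E : Type*} [NormedAddCommGroup E]
    [NormedSpace ℝ E] [CompleteSpace E] [MeasurableSpace E] [OpensMeasurableSpace E]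
    (F : E →L[ℝ] ℝ) (hF : ‖F‖ ≤ 1) {Z : ι → Ω → E} (h_indep : iIndepFun Z P)
    (hZ : ∀ i, AEStronglyMeasurable (Z i) P) {b V ε : ℝ} (hb : 0 ≤ b)
    (hZb : ∀ i, ∀ᵐ ω ∂P, ‖Z i ω‖ ≤ b) (hV : 0 < V) (hZV : ∑ i, ∫ ω, ‖Z i ω‖ ^ 2 ∂P ≤ V)
    (hε : 0 ≤ ε) :
    P.real {ω | ε ≤ |F (∑ i, (Z i ω - P[Z i]))|} ≤
      2 * exp (-ε ^ 2 / (2 * (V + b * ε / 3))) := by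
  have hFZb (i : ι) : ∀ᵐ ω ∂P, |F (Z i ω)| ≤ b :=
    (hZb i).mono fun ω hω => (F.le_of_opNorm_le hF (Z i ω)).trans (by linarith)
  have hZint (i : ι) : Integrable (Z i) P := .of_bound (hZ i) b (hZb i)
  have hZsq (i : ι) : Integrable (fun ω => ‖Z i ω‖ ^ 2) P :=
    .of_bound ((hZ i).norm.pow 2) (b ^ 2) <| (hZb i).mono fun ω hω => by
      rw [norm_pow, norm_norm]; exact pow_le_pow_left₀ (norm_nonneg _) hω 2
  have hvar : ∑ i, P[(fun ω => F (Z i ω)) ^ 2] ≤ V := by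
    refine le_trans (Finset.sum_le_sum fun i _ => integral_mono_of_nonneg
      (ae_of_all _ fun ω => sq_nonneg _) (hZsq i) (ae_of_all _ fun ω => ?_)) hZV
    simpa only [Pi.pow_apply, Real.norm_eq_abs, sq_abs] using
      pow_le_pow_left₀ (norm_nonneg _) ((F.le_of_opNorm_le hF (Z i ω)).trans_eq (one_mul _)) 2
  have hsum (ω : Ω) : F (∑ i, (Z i ω - P[Z i])) = ∑ i, (F (Z i ω) - ∫ ω', F (Z i ω') ∂P) := by
    simp only [map_sum, map_sub, F.integral_comp_comm (hZint _)]
  simp only [hsum]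
  exact measureReal_abs_sum_sub_integral_ge_le (h_indep.comp (fun _ => F) fun _ => F.measurable)
    (fun i => F.continuous.comp_aestronglyMeasurable (hZ i)) hb hFZb hV hvar hε

theorem measureReal_norm_sum_sub_integral_ge_le {Z : ι → Ω → ℂ} (h_indep : iIndepFun Z P)
    (hZ : ∀ i, AEStronglyMeasurable (Z i) P) {b V δ : ℝ} (hb : 0 ≤ b)
    (hZb : ∀ i, ∀ᵐ ω ∂P, ‖Z i ω‖ ≤ b) (hV : 0 < V) (hZV : ∑ i, ∫ ω, ‖Z i ω‖ ^ 2 ∂P ≤ V)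
    (hδ : 0 ≤ δ) :
    P.real {ω | δ ≤ ‖∑ i, (Z i ω - P[Z i])‖} ≤ 4 * exp (-δ ^ 2 / (4 * (V + b * δ / 3))) := by
  set ε := δ / √2
  have hε : 0 ≤ ε := by positivity
  have hre := measureReal_abs_map_sum_sub_integral_ge_le Complex.reCLM Complex.reCLM_norm.le
    h_indep hZ hb hZb hV hZV hε
  have him := measureReal_abs_map_sum_sub_integral_ge_le Complex.imCLM Complex.imCLM_norm.le
    h_indep hZ hb hZb hV hZV hε
  have hexp : -ε ^ 2 / (2 * (V + b * ε / 3)) ≤ -δ ^ 2 / (4 * (V + b * δ / 3)) := by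
    have hεsq : ε ^ 2 = δ ^ 2 / 2 := by rw [div_pow, sq_sqrt zero_le_two]
    have hεδ : ε ≤ δ := div_le_self hδ one_lt_sqrt_two.le
    rw [hεsq, neg_div, neg_div, neg_le_neg_iff, div_div, show 2 * (2 * (V + b * ε / 3)) =
      4 * (V + b * ε / 3) by ring]
    gcongr
  calc P.real {ω | δ ≤ ‖∑ i, (Z i ω - P[Z i])‖}
      ≤ P.real ({ω | ε ≤ |Complex.reCLM (∑ i, (Z i ω - P[Z i]))|} ∪
          {ω | ε ≤ |Complex.imCLM (∑ i, (Z i ω - P[Z i]))|}) := by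
        refine measureReal_mono fun ω hω => ?_
        have := (Set.mem_ofPred_eq ▸ hω).trans (Complex.norm_le_sqrt_two_mul_max _)
        rw [← div_le_iff₀' (sqrt_pos.mpr zero_lt_two), le_max_iff] at this
        exact this
    _ ≤ _ := measureReal_union_le _ _
    _ ≤ 2 * exp (-ε ^ 2 / (2 * (V + b * ε / 3))) + 2 * exp (-ε ^ 2 / (2 * (V + b * ε / 3))) :=
        add_le_add hre him
    _ ≤ 4 * exp (-δ ^ 2 / (4 * (V + b * δ / 3))) := by
        have := exp_le_exp.mpr hexp
        linarith

theorem measureReal_norm_sum_comp_sub_integral_ge_le {E : Type*} [MeasurableSpace E]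
    {μ : Measure E} [Nonempty ι] {X : ι → Ω → E} (hX_meas : ∀ i, Measurable (X i))
    (h_indep : iIndepFun X P) (hX_law : ∀ i, P.map (X i) = μ) {g : E → ℂ} (hg : Measurable g)
    {b σ δ : ℝ} (hgb : ∀ y, ‖g y‖ ≤ b) (hσ : 0 < σ) (hgσ : ∫ y, ‖g y‖ ^ 2 ∂μ ≤ σ)
    (hδ : 0 ≤ δ) :
    P.real {ω | δ ≤ ‖∑ i, (g (X i ω) - ∫ y, g y ∂μ)‖} ≤
      4 * exp (-δ ^ 2 / (4 * (Fintype.card ι * σ + b * δ / 3))) := by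
  have hmean (i : ι) : P[fun ω => g (X i ω)] = ∫ y, g y ∂μ := by
    rw [← hX_law i, integral_map (hX_meas i).aemeasurable hg.aestronglyMeasurable]
  have hsq (i : ι) : ∫ ω, ‖g (X i ω)‖ ^ 2 ∂P = ∫ y, ‖g y‖ ^ 2 ∂μ := by
    rw [← hX_law i, integral_map (hX_meas i).aemeasurable
      (hg.norm.pow_const 2).aestronglyMeasurable]
  have hb : 0 ≤ b := (norm_nonneg _).trans
    (hgb (X (Classical.arbitrary ι) (nonempty_of_isProbabilityMeasure P).some))
  have hvar : ∑ i, ∫ ω, ‖g (X i ω)‖ ^ 2 ∂P ≤ Fintype.card ι * σ := by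
    simp only [hsq, Finset.sum_const, Finset.card_univ, nsmul_eq_mul]
    gcongr
  simpa only [hmean] using measureReal_norm_sum_sub_integral_ge_le (Z := fun i ω => g (X i ω))
    (h_indep.comp (fun _ => g) fun _ => hg) (fun i => (hg.comp (hX_meas i)).aestronglyMeasurable)
    hb (fun i => ae_of_all _ fun ω => hgb _) (by positivity) hvar hδ

end ProbabilityTheory

namespace MeasureTheory

theorem integral_norm_mul_sq_le {α R : Type*} [MeasurableSpace α] [NonUnitalSeminormedRing R]
    {μ : Measure α} {f w : α → R} {V : ℝ} (hf : Integrable (fun y => ‖f y‖ ^ 2) μ)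
    (hw : ∀ y, ‖w y‖ ≤ V) :
    ∫ y, ‖f y * w y‖ ^ 2 ∂μ ≤ (∫ y, ‖f y‖ ^ 2 ∂μ) * V ^ 2 := by
  rw [← integral_mul_const]
  refine integral_mono_of_nonneg (ae_of_all _ fun _ => sq_nonneg _) (hf.mul_const _)
    (ae_of_all _ fun y => ?_)
  calc ‖f y * w y‖ ^ 2 ≤ (‖f y‖ * V) ^ 2 := pow_le_pow_left₀ (norm_nonneg _)
        ((norm_mul_le _ _).trans (mul_le_mul_of_nonneg_left (hw y) (norm_nonneg _))) 2
    _ = ‖f y‖ ^ 2 * V ^ 2 := mul_pow _ _ _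

end MeasureTheory

theorem Complex.lt_norm_one_div_mul_sum_sub_iff {N : ℕ} (hN : 0 < N) (z : Fin N → ℂ) (c : ℂ)
    (δ : ℝ) : δ < ‖(1 / (N : ℂ)) * ∑ j, z j - c‖ ↔ N * δ < ‖∑ j, (z j - c)‖ := by
  have hN' : (N : ℂ) ≠ 0 := Nat.cast_ne_zero.mpr hN.ne'
  rw [show (1 / (N : ℂ)) * ∑ j, z j - c = (1 / N) * ∑ j, (z j - c) by
      rw [Finset.sum_sub_distrib, Finset.sum_const, Finset.card_univ, Fintype.card_fin,
        nsmul_eq_mul]; field_simp, norm_mul, norm_div, norm_one, Complex.norm_natCast,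
    one_div_mul_eq_div, lt_div_iff₀' (by exact_mod_cast hN)]

theorem empirical_inner_product_consistency_general
    {Ω : Type*} [MeasurableSpace Ω] (ℙ : Measure Ω) [IsProbabilityMeasure ℙ]
    {D : ℕ} (μ : Measure (EuclideanSpace ℝ (Fin D))) [IsProbabilityMeasure μ]
    (N : ℕ) (hN : 0 < N)
    (X : Fin N → Ω → EuclideanSpace ℝ (Fin D))
    (hX_meas : ∀ j, Measurable (X j))
    (hX_indep : ProbabilityTheory.iIndepFun X ℙ)
    (hX_law : ∀ j, Measure.map (X j) ℙ = μ)
    (ς : ℝ) (h : ℝ) (hh0 : 0 < h)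
    (u v : EuclideanSpace ℝ (Fin D) → ℂ)
    (hu_meas : Measurable u) (hv_meas : Measurable v)
    (Kbar K₂ : ℝ) (hK₂ : 0 < K₂)
    (hu_sup : ∀ y, ‖u y‖ ≤ h ^ (-ς) * Kbar)
    (hu_L2 : ∫ y, ‖u y‖ ^ 2 ∂μ ≤ K₂)
    (hv_bdd : BddAbove (Set.range fun y => ‖v y‖))
    (hv_pos : 0 < ⨆ y, ‖v y‖)
    (δ : ℝ) (hδ : 0 < δ) :
    ℙ {ω | δ < ‖(1 / (N : ℂ)) * ∑ j, u (X j ω) * (starRingEnd ℂ) (v (X j ω))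
          - ∫ y, u y * (starRingEnd ℂ) (v y) ∂μ‖}
      ≤ ENNReal.ofReal (4 * Real.exp
          (-(N * h ^ ς * δ ^ 2) /
            (4 * (⨆ y, ‖v y‖) * (h ^ ς * K₂ * (⨆ y, ‖v y‖) + Kbar * δ / 3)))) := by
  set V := ⨆ y, ‖v y‖
  have hv_le (y : EuclideanSpace ℝ (Fin D)) : ‖(starRingEnd ℂ) (v y)‖ ≤ V :=
    (Complex.norm_conj _).trans_le (le_ciSup hv_bdd y)
  have hu_sq : Integrable (fun y => ‖u y‖ ^ 2) μ :=
    .of_bound (hu_meas.norm.pow_const 2).aestronglyMeasurable ((h ^ (-ς) * Kbar) ^ 2)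
      (ae_of_all _ fun y => by
        rw [norm_pow, norm_norm]; exact pow_le_pow_left₀ (norm_nonneg _) (hu_sup y) 2)
  have : Nonempty (Fin N) := ⟨⟨0, hN⟩⟩
  have hbern := ProbabilityTheory.measureReal_norm_sum_comp_sub_integral_ge_le hX_meas
    hX_indep hX_law (hu_meas.mul (Complex.continuous_conj.measurable.comp hv_meas))
    (fun y => (norm_mul_le _ _).trans
      (mul_le_mul (hu_sup y) (hv_le y) (norm_nonneg _) ((norm_nonneg _).trans (hu_sup y))))
    (mul_pos hK₂ (pow_pos hv_pos 2))
    ((integral_norm_mul_sq_le hu_sq hv_le).trans (by gcongr)) (by positivity : 0 ≤ (N : ℝ) * δ)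
  calc ℙ _ ≤ ℙ {ω | N * δ ≤ ‖∑ j, (u (X j ω) * (starRingEnd ℂ) (v (X j ω))
          - ∫ y, u y * (starRingEnd ℂ) (v y) ∂μ)‖} :=
        measure_mono fun ω hω => ((Complex.lt_norm_one_div_mul_sum_sub_iff hN _ _ _).mp hω).le
    _ = ENNReal.ofReal (ℙ.real _) := (ofReal_measureReal).symm
    _ ≤ _ := ENNReal.ofReal_le_ofReal hbern
    _ = _ := by
        have : 0 < h ^ ς := Real.rpow_pos_of_pos hh0 ς
        rw [Fintype.card_fin, Real.rpow_neg hh0.le]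
        field_simp

/-- L²-consistency of empirical inner products against a localized family:
if `sup |u| ≤ h^{-ς} K̄` and `∫ |u|² dμ ≤ K₂`, then the empirical inner
product of `u` with a fixed bounded `v` concentrates around `∫ u ⬝ conj v dμ`. -/
theorem empirical_inner_product_consistency
    {Ω : Type*} [MeasurableSpace Ω] (ℙ : Measure Ω) [IsProbabilityMeasure ℙ]
    {D : ℕ} (μ : Measure (EuclideanSpace ℝ (Fin D))) [IsProbabilityMeasure μ]
    (N : ℕ) (hN : 0 < N)
    (X : Fin N → Ω → EuclideanSpace ℝ (Fin D))
    (hX_meas : ∀ j, Measurable (X j))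
    (hX_indep : ProbabilityTheory.iIndepFun X ℙ)
    (hX_law : ∀ j, Measure.map (X j) ℙ = μ)
    (ς : ℝ) (h : ℝ) (hh0 : 0 < h) (hh1 : h ≤ 1)
    (u v : EuclideanSpace ℝ (Fin D) → ℂ)
    (hu_meas : Measurable u) (hv_meas : Measurable v)
    (Kbar K₂ : ℝ) (hKbar : 0 < Kbar) (hK₂ : 0 < K₂)
    (hu_sup : ∀ y, ‖u y‖ ≤ h ^ (-ς) * Kbar)
    (hu_L2 : ∫ y, ‖u y‖ ^ 2 ∂μ ≤ K₂)
    (hv_bdd : BddAbove (Set.range fun y => ‖v y‖))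
    (hv_pos : 0 < ⨆ y, ‖v y‖)
    (δ : ℝ) (hδ : 0 < δ) :
    ℙ {ω | δ < ‖(1 / (N : ℂ)) * ∑ j, u (X j ω) * (starRingEnd ℂ) (v (X j ω))
          - ∫ y, u y * (starRingEnd ℂ) (v y) ∂μ‖}
      ≤ ENNReal.ofReal (4 * Real.exp
          (-(N * h ^ ς * δ ^ 2) /
            (4 * (⨆ y, ‖v y‖) * (h ^ ς * K₂ * (⨆ y, ‖v y‖) + Kbar * δ / 3)))) :=
  empirical_inner_product_consistency_general ℙ μ N hN X hX_meas hX_indep hX_law ς h hh0 u v hu_meas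
    hv_meas Kbar K₂ hK₂ hu_sup hu_L2 hv_bdd hv_pos δ hδ
end

section
/- Let E be a complex Banach space, let S, T : E → E be bounded linear operators with ‖S‖ ≤ 1 and ‖T‖ ≤ 1, let u ∈ E, δ ≥ 0, K > 0, and let (a_m)_{m ≥ 0} be complex numbers with |a_m| ≤ K / m! for all m. If ‖S^m u − T^m u‖ ≤ m² δ for every m ≥ 1, then the series Σ_{m≥0} a_m S^m u and Σ_{m≥0} a_m T^m u converge absolutely and ‖ Σ_{m≥0} a_m S^m u − Σ_{m≥0} a_m T^m u ‖ ≤ 2e K δ. -/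
lemma exp_one_tsum_aux : Real.exp 1 = ∑' n : ℕ, (1:ℝ)/n.factorial := by
  rw [Real.exp_eq_exp_ℝ, NormedSpace.exp_eq_tsum_div]
  simp

lemma sum_m_fact_aux : Summable (fun m : ℕ => (m:ℝ)/m.factorial) ∧
    ∑' m : ℕ, (m:ℝ)/m.factorial = Real.exp 1 := by
  have hb : Summable (fun n : ℕ => (1:ℝ)/n.factorial) := by
    simpa using Real.summable_pow_div_factorial 1
  have hshift : (fun m : ℕ => ((m+1:ℕ):ℝ)/(m+1).factorial) = fun m : ℕ => (1:ℝ)/m.factorial := by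
    funext m
    rw [Nat.factorial_succ]
    push_cast
    rw [div_eq_div_iff (by positivity) (by positivity)]
    ring
  have hs : Summable (fun m : ℕ => (m:ℝ)/m.factorial) := by
    rw [← summable_nat_add_iff 1, hshift]; exact hb
  refine ⟨hs, ?_⟩
  rw [Summable.tsum_eq_zero_add hs]
  simp only [Nat.cast_zero, zero_div, zero_add]
  rw [hshift, ← exp_one_tsum_aux]

lemma sum_sq_fact_aux : Summable (fun m : ℕ => (m:ℝ)^2/m.factorial) ∧
    ∑' m : ℕ, (m:ℝ)^2/m.factorial = 2 * Real.exp 1 := by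
  have hb : Summable (fun n : ℕ => (1:ℝ)/n.factorial) := by
    simpa using Real.summable_pow_div_factorial 1
  obtain ⟨h1, e1⟩ := sum_m_fact_aux
  have hshift : (fun m : ℕ => ((m+1:ℕ):ℝ)^2/(m+1).factorial)
      = fun m : ℕ => (m:ℝ)/m.factorial + (1:ℝ)/m.factorial := by
    funext m
    rw [Nat.factorial_succ, div_add_div _ _ (by positivity) (by positivity),
      div_eq_div_iff (by positivity) (by positivity)]
    push_cast
    ring
  have hsum' : Summable (fun m : ℕ => (m:ℝ)/m.factorial + (1:ℝ)/m.factorial) := h1.add hb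
  have hs : Summable (fun m : ℕ => (m:ℝ)^2/m.factorial) := by
    rw [← summable_nat_add_iff 1, hshift]; exact hsum'
  refine ⟨hs, ?_⟩
  rw [Summable.tsum_eq_zero_add hs]
  simp only [Nat.cast_zero, zero_pow, zero_div, zero_add]
  rw [hshift, Summable.tsum_add h1 hb, e1, ← exp_one_tsum_aux]
  ring

/-- Deterministic core of the consistency of bounded analytic functional calculus:
if two contractions `S, T` on a Banach space satisfy `‖Sᵐu - Tᵐu‖ ≤ m²δ` and the
coefficients satisfy `|aₘ| ≤ K/m!`, then the two series `Σ aₘ Sᵐ u`, `Σ aₘ Tᵐ u`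
converge absolutely and differ by at most `2eKδ`. -/
theorem analytic_functional_calculus_consistency
    {E : Type*} [NormedAddCommGroup E] [NormedSpace ℂ E] [CompleteSpace E]
    (S T : E →L[ℂ] E) (hS : ‖S‖ ≤ 1) (hT : ‖T‖ ≤ 1)
    (u : E) (δ : ℝ) (hδ : 0 ≤ δ) (K : ℝ) (hK : 0 < K)
    (a : ℕ → ℂ) (ha : ∀ m, ‖a m‖ ≤ K / (m.factorial : ℝ))
    (hpow : ∀ m : ℕ, 1 ≤ m → ‖(S ^ m) u - (T ^ m) u‖ ≤ (m : ℝ) ^ 2 * δ) :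
    Summable (fun m : ℕ => ‖a m • ((S ^ m) u)‖) ∧
    Summable (fun m : ℕ => ‖a m • ((T ^ m) u)‖) ∧
    ‖(∑' m : ℕ, a m • ((S ^ m) u)) - ∑' m : ℕ, a m • ((T ^ m) u)‖
      ≤ 2 * Real.exp 1 * K * δ := by
  have hb : Summable (fun n : ℕ => (1:ℝ)/n.factorial) := by
    simpa using Real.summable_pow_div_factorial 1
  -- contraction powers are contractions on u
  have hcontr : ∀ (R : E →L[ℂ] E), ‖R‖ ≤ 1 → ∀ m : ℕ, ‖(R ^ m) u‖ ≤ ‖u‖ := by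
    intro R hR m
    induction m with
    | zero => simp
    | succ n ih =>
      rw [pow_succ']
      calc ‖(R * R ^ n) u‖ = ‖R ((R ^ n) u)‖ := rfl
        _ ≤ ‖R‖ * ‖(R ^ n) u‖ := R.le_opNorm _
        _ ≤ 1 * ‖u‖ := by gcongr
        _ = ‖u‖ := one_mul _
  have hbound : ∀ (R : E →L[ℂ] E), ‖R‖ ≤ 1 → ∀ m : ℕ,
      ‖a m • ((R ^ m) u)‖ ≤ K/(m.factorial : ℝ) * ‖u‖ := by
    intro R hR m
    rw [norm_smul]
    exact mul_le_mul (ha m) (hcontr R hR m) (norm_nonneg _) (by positivity)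
  have hg : Summable (fun m : ℕ => K/(m.factorial : ℝ) * ‖u‖) := by
    have := (hb.mul_left K).mul_right ‖u‖
    simpa [div_eq_mul_inv, mul_assoc, mul_comm, mul_left_comm] using this
  have hsumS : Summable (fun m : ℕ => ‖a m • ((S ^ m) u)‖) :=
    Summable.of_nonneg_of_le (fun m => norm_nonneg _) (hbound S hS) hg
  have hsumT : Summable (fun m : ℕ => ‖a m • ((T ^ m) u)‖) :=
    Summable.of_nonneg_of_le (fun m => norm_nonneg _) (hbound T hT) hg
  refine ⟨hsumS, hsumT, ?_⟩
  have hS' : Summable (fun m : ℕ => a m • ((S ^ m) u)) := hsumS.of_norm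
  have hT' : Summable (fun m : ℕ => a m • ((T ^ m) u)) := hsumT.of_norm
  rw [← Summable.tsum_sub hS' hT']
  obtain ⟨hq, eq2⟩ := sum_sq_fact_aux
  have hgsum : HasSum (fun m : ℕ => K * δ * ((m:ℝ)^2/m.factorial)) (K * δ * (2 * Real.exp 1)) := by
    rw [← eq2]; exact hq.hasSum.mul_left _
  have hterm : ∀ m : ℕ, ‖a m • ((S ^ m) u) - a m • ((T ^ m) u)‖
      ≤ K * δ * ((m:ℝ)^2/m.factorial) := by
    intro m
    rw [← smul_sub, norm_smul]
    rcases Nat.eq_zero_or_pos m with h0 | h1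
    · subst h0; simp
    · calc ‖a m‖ * ‖(S ^ m) u - (T ^ m) u‖
          ≤ (K/(m.factorial:ℝ)) * ((m:ℝ)^2 * δ) :=
            mul_le_mul (ha m) (hpow m h1) (norm_nonneg _) (by positivity)
        _ = K * δ * ((m:ℝ)^2/m.factorial) := by
            field_simp
  have := tsum_of_norm_bounded hgsum hterm
  calc ‖∑' m : ℕ, (a m • ((S ^ m) u) - a m • ((T ^ m) u))‖
      ≤ K * δ * (2 * Real.exp 1) := this
    _ = 2 * Real.exp 1 * K * δ := by ring
end

section
/- Let E be a complex Banach space, S, T : E → E bounded linear operators with ‖S‖ ≤ 1 and ‖T‖ ≤ 1, u ∈ E, δ ≥ 0, υ ∈ [0, 1/2), and 0 < ε ≤ 3. For a bounded operator X with ‖X‖ ≤ 1 define B_ε(X) u := Σ_{m=0}^∞ binom(1/2, m) (−1)^m (1+ε)^{1/2 − m} X^m u, where binom(1/2, m) is the generalized binomial coefficient (the binomial series for √((1+ε)·I − X) applied to u). If ‖S^m u − T^m u‖ ≤ m^{1+υ} δ for every m ≥ 1, then both series converge absolutely and ‖ B_ε(S) u − B_ε(T) u ‖ ≤ 2 √π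 · ε^{−(1/2 + υ)} · δ. -/
/-!
Since `|binom(1/2, m)| ≤ 1 / (2 m^{3/2})` and `(1+ε)^{1/2-m} = √(1+ε) (1+ε)^{-m}`, both series
converge absolutely for contractions, and the `m`-th term of the difference is at most
`(√(1+ε)/2) δ m^{υ-1/2} (1+ε)^{-m}`. Splitting this sum at `M = ⌊1/ε⌋`, the first `M` terms
contribute at most `∑_{m ≤ M} m^{υ-1/2} ≤ 2 M^{υ+1/2} ≤ 2 ε^{-(1/2+υ)}`, and the remaining ones at
most `(M+1)^{υ-1/2}` times the geometric tail `1/ε`, i.e. `ε^{-(1/2+υ)}`. Finally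
`3 √(1+ε) / 2 ≤ 3 ≤ 2√π` for `ε ≤ 3`.
-/

/-- The generalized binomial coefficient `binom(1/2, m)`. -/
noncomputable def binomHalf (m : ℕ) : ℝ :=
  (∏ i ∈ Finset.range m, ((1 : ℝ) / 2 - (i : ℝ))) / (m.factorial : ℝ)

/-- The binomial series for `√((1+ε)·I - X)` applied to `u`. -/
noncomputable def sqrtPerturbedSeries {E : Type*} [NormedAddCommGroup E]
    [NormedSpace ℂ E] (ε : ℝ) (X : E →L[ℂ] E) (u : E) : E :=
  ∑' m : ℕ, ((binomHalf m * (-1 : ℝ) ^ m * (1 + ε) ^ ((1 : ℝ) / 2 - (m : ℝ)) : ℝ) : ℂ)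
    • ((X ^ m) u)

open Finset Real

lemma binomHalf_zero : binomHalf 0 = 1 := by simp [binomHalf]

lemma binomHalf_succ (m : ℕ) :
    binomHalf (m + 1) = binomHalf m * ((1 / 2 - m) / (m + 1)) := by
  rw [binomHalf, binomHalf, prod_range_succ, Nat.factorial_succ, div_mul_div_comm]
  push_cast
  ring

lemma abs_binomHalf_le_one (m : ℕ) : |binomHalf m| ≤ 1 := by
  induction m with
  | zero => simp [binomHalf_zero]
  | succ m ih =>
    have hq : |(1 / 2 - (m : ℝ)) / (m + 1)| ≤ 1 := by
      rw [abs_div, abs_of_pos (by positivity : (0 : ℝ) < m + 1), div_le_one (by positivity), abs_le]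
      constructor <;> linarith [(m.cast_nonneg : (0 : ℝ) ≤ m)]
    rw [binomHalf_succ, abs_mul]
    exact mul_le_one₀ ih (abs_nonneg _) hq

lemma abs_binomHalf_succ_mul_le (m : ℕ) :
    |binomHalf (m + 1)| * ((m + 1) * √(m + 1)) ≤ 1 / 2 := by
  induction m with
  | zero => norm_num [binomHalf_succ, binomHalf_zero]
  | succ m ih =>
    -- squared, this is `(m + 1/2)² (m + 2) ≤ (m + 1)³`
    have hweight : ((m : ℝ) + 1 / 2) * √(m + 2) ≤ (m + 1) * √(m + 1) := by
      refine (pow_le_pow_iff_left₀ (by positivity) (by positivity) two_ne_zero).1 ?_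
      rw [mul_pow, mul_pow, sq_sqrt (by positivity), sq_sqrt (by positivity)]
      nlinarith
    have hq : |(1 / 2 - ((m + 1 : ℕ) : ℝ)) / ((m + 1 : ℕ) + 1)| * (((m + 1 : ℕ) : ℝ) + 1) =
        m + 1 / 2 := by
      push_cast
      rw [abs_div, abs_of_nonpos (by linarith), abs_of_pos (by positivity)]
      field_simp
      ring
    calc |binomHalf (m + 1 + 1)| * ((((m + 1 : ℕ) : ℝ) + 1) * √(((m + 1 : ℕ) : ℝ) + 1))
        = |binomHalf (m + 1)| * ((m + 1 / 2) * √(m + 2)) := by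
          rw [binomHalf_succ, abs_mul, mul_assoc, ← mul_assoc |_ / _|, hq]
          push_cast
          ring_nf
      _ ≤ |binomHalf (m + 1)| * ((m + 1) * √(m + 1)) := by gcongr
      _ ≤ 1 / 2 := ih

noncomputable def sqrtCoeff (ε : ℝ) (m : ℕ) : ℝ :=
  binomHalf m * (-1) ^ m * (1 + ε) ^ ((1 : ℝ) / 2 - m)

lemma abs_sqrtCoeff {ε : ℝ} (hε : 0 < 1 + ε) (m : ℕ) :
    |sqrtCoeff ε m| = |binomHalf m| * √(1 + ε) * (1 + ε)⁻¹ ^ m := by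
  rw [sqrtCoeff, abs_mul, abs_mul, abs_pow, abs_neg, abs_one, one_pow, mul_one,
    abs_of_pos (rpow_pos_of_pos hε _), rpow_sub hε, rpow_natCast, sqrt_eq_rpow, div_eq_mul_inv,
    inv_pow, mul_assoc]

lemma summable_inv_one_add_pow {ε : ℝ} (hε : 0 < ε) :
    Summable fun m : ℕ => (1 + ε)⁻¹ ^ m :=
  summable_geometric_of_lt_one (by positivity) (inv_lt_one_of_one_lt₀ (by linarith))

lemma tsum_inv_one_add_pow_succ {ε : ℝ} (hε : 0 < ε) :
    ∑' m : ℕ, (1 + ε)⁻¹ ^ (m + 1) = ε⁻¹ := by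
  simp_rw [pow_succ]
  rw [tsum_mul_right, tsum_geometric_of_lt_one (by positivity) (inv_lt_one_of_one_lt₀ (by linarith))]
  field_simp
  rw [add_sub_cancel_left, div_self hε.ne']

lemma summable_abs_sqrtCoeff {ε : ℝ} (hε : 0 < ε) : Summable fun m => |sqrtCoeff ε m| := by
  refine ((summable_inv_one_add_pow hε).mul_left √(1 + ε)).of_nonneg_of_le (fun _ => abs_nonneg _)
    fun m => ?_
  rw [abs_sqrtCoeff (by linarith), mul_assoc]
  exact mul_le_of_le_one_left (by positivity) (abs_binomHalf_le_one m)

lemma sum_range_inv_sqrt_succ_le (M : ℕ) : ∑ m ∈ range M, (√(m + 1))⁻¹ ≤ 2 * √M := by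
  induction M with
  | zero => simp
  | succ M ih =>
    have hM : 0 < √((M : ℝ) + 1) := sqrt_pos.2 (by positivity)
    -- `2 (√(M+1) - √M) = 2 / (√(M+1) + √M)` and `√M ≤ √(M+1)`
    have step : (√((M : ℝ) + 1))⁻¹ ≤ 2 * √(M + 1) - 2 * √M := by
      rw [inv_le_iff_one_le_mul₀ hM]
      nlinarith [sq_sqrt (by positivity : (0 : ℝ) ≤ M + 1), sq_sqrt (M.cast_nonneg : (0 : ℝ) ≤ M)]
    rw [sum_range_succ]
    push_cast
    linarith

lemma sum_range_succ_rpow_le {υ : ℝ} (hυ : 0 ≤ υ) (M : ℕ) :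
    ∑ m ∈ range M, ((m : ℝ) + 1) ^ (υ - 1 / 2) ≤ 2 * (M : ℝ) ^ (υ + 1 / 2) := calc
  ∑ m ∈ range M, ((m : ℝ) + 1) ^ (υ - 1 / 2)
      = ∑ m ∈ range M, ((m : ℝ) + 1) ^ υ * (√(m + 1))⁻¹ := by
        refine sum_congr rfl fun m _ => ?_
        rw [sub_eq_add_neg, rpow_add (by positivity), rpow_neg (by positivity), sqrt_eq_rpow]
    _ ≤ ∑ m ∈ range M, (M : ℝ) ^ υ * (√(m + 1))⁻¹ := by
        gcongr with m hm
        exact_mod_cast mem_range.1 hm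
    _ ≤ (M : ℝ) ^ υ * (2 * √M) := by
        rw [← mul_sum]
        gcongr
        exact sum_range_inv_sqrt_succ_le M
    _ = 2 * (M : ℝ) ^ (υ + 1 / 2) := by
        rw [rpow_add' M.cast_nonneg (by linarith), sqrt_eq_rpow]
        ring

lemma summable_succ_rpow_mul_inv_one_add_pow {ε υ : ℝ} (hε : 0 < ε) (hυ : υ ≤ 1 / 2) :
    Summable fun m : ℕ => ((m : ℝ) + 1) ^ (υ - 1 / 2) * (1 + ε)⁻¹ ^ (m + 1) := by
  refine ((summable_nat_add_iff 1).2 (summable_inv_one_add_pow hε)).of_nonneg_of_le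
    (fun _ => by positivity) fun m => ?_
  exact mul_le_of_le_one_left (by positivity)
    (rpow_le_one_of_one_le_of_nonpos (by linarith [m.cast_nonneg (α := ℝ)]) (by linarith))

-- Split at `M = ⌊ε⁻¹⌋₊`: below `M` drop the geometric factor, above `M` drop the power.
lemma tsum_succ_rpow_mul_inv_one_add_pow_le {ε υ : ℝ} (hε : 0 < ε) (hυ0 : 0 ≤ υ)
    (hυ : υ ≤ 1 / 2) :
    ∑' m : ℕ, ((m : ℝ) + 1) ^ (υ - 1 / 2) * (1 + ε)⁻¹ ^ (m + 1) ≤ 3 * ε⁻¹ ^ (υ + 1 / 2) := by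
  set f := fun m : ℕ => ((m : ℝ) + 1) ^ (υ - 1 / 2) * (1 + ε)⁻¹ ^ (m + 1)
  have hf := summable_succ_rpow_mul_inv_one_add_pow hε hυ
  set M := ⌊ε⁻¹⌋₊
  have hr0 : 0 ≤ (1 + ε)⁻¹ := by positivity
  have hr1 : (1 + ε)⁻¹ ≤ 1 := inv_le_one_of_one_le₀ (by linarith)
  have head : ∑ m ∈ range M, f m ≤ 2 * ε⁻¹ ^ (υ + 1 / 2) := calc
    ∑ m ∈ range M, f m ≤ ∑ m ∈ range M, ((m : ℝ) + 1) ^ (υ - 1 / 2) :=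
        sum_le_sum fun m _ => mul_le_of_le_one_right (by positivity) (pow_le_one₀ hr0 hr1)
    _ ≤ 2 * (M : ℝ) ^ (υ + 1 / 2) := sum_range_succ_rpow_le hυ0 M
    _ ≤ 2 * ε⁻¹ ^ (υ + 1 / 2) := by
        gcongr
        exact Nat.floor_le (by positivity)
  have tail : ∑' n, f (n + M) ≤ ε⁻¹ ^ (υ + 1 / 2) := calc
    ∑' n, f (n + M) ≤ ∑' n : ℕ, ε⁻¹ ^ (υ - 1 / 2) * (1 + ε)⁻¹ ^ (n + 1) := by
        refine Summable.tsum_le_tsum (fun n => ?_) ((summable_nat_add_iff M).2 hf)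
          (((summable_nat_add_iff 1).2 (summable_inv_one_add_pow hε)).mul_left _)
        have hM : ε⁻¹ ≤ ((n + M : ℕ) : ℝ) + 1 := by
          have := Nat.lt_floor_add_one ε⁻¹
          push_cast
          linarith [n.cast_nonneg (α := ℝ)]
        exact mul_le_mul (rpow_le_rpow_of_nonpos (by positivity) hM (by linarith))
          (pow_le_pow_of_le_one hr0 hr1 (by omega)) (by positivity) (by positivity)
    _ = ε⁻¹ ^ (υ + 1 / 2) := by
        rw [tsum_mul_left, tsum_inv_one_add_pow_succ hε, ← rpow_add_one (by positivity)]
        ring_nf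
  rw [← hf.sum_add_tsum_nat_add M]
  linarith

lemma abs_sqrtCoeff_succ_mul_rpow_le {ε υ : ℝ} (hε : 0 < 1 + ε) (m : ℕ) :
    |sqrtCoeff ε (m + 1)| * ((m + 1 : ℕ) : ℝ) ^ (1 + υ) ≤
      √(1 + ε) / 2 * (((m : ℝ) + 1) ^ (υ - 1 / 2) * (1 + ε)⁻¹ ^ (m + 1)) := by
  have hm : (0 : ℝ) < m + 1 := by positivity
  have hsplit : ((m : ℝ) + 1) ^ (1 + υ) = ((m + 1) * √(m + 1)) * ((m : ℝ) + 1) ^ (υ - 1 / 2) := by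
    rw [sqrt_eq_rpow, ← rpow_one_add' hm.le (by norm_num), ← rpow_add hm]
    ring_nf
  push_cast
  rw [abs_sqrtCoeff hε, hsplit]
  calc |binomHalf (m + 1)| * √(1 + ε) * (1 + ε)⁻¹ ^ (m + 1) *
        ((m + 1) * √(m + 1) * ((m : ℝ) + 1) ^ (υ - 1 / 2))
      = |binomHalf (m + 1)| * ((m + 1) * √(m + 1)) *
          (√(1 + ε) * (((m : ℝ) + 1) ^ (υ - 1 / 2) * (1 + ε)⁻¹ ^ (m + 1))) := by ring
    _ ≤ 1 / 2 * (√(1 + ε) * (((m : ℝ) + 1) ^ (υ - 1 / 2) * (1 + ε)⁻¹ ^ (m + 1))) := by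
        gcongr
        exact abs_binomHalf_succ_mul_le m
    _ = _ := by ring

lemma summable_abs_sqrtCoeff_mul_rpow {ε υ : ℝ} (hε : 0 < ε) (hυ : υ ≤ 1 / 2) :
    Summable fun m : ℕ => |sqrtCoeff ε m| * (m : ℝ) ^ (1 + υ) :=
  (summable_nat_add_iff 1).1 <|
    ((summable_succ_rpow_mul_inv_one_add_pow hε hυ).mul_left _).of_nonneg_of_le
      (fun _ => by positivity) (abs_sqrtCoeff_succ_mul_rpow_le (by linarith))

lemma three_le_two_mul_sqrt_pi : 3 ≤ 2 * √π := by
  have : 3 / 2 ≤ √π := (le_sqrt (by norm_num) pi_pos.le).2 (by linarith [pi_gt_three])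
  linarith

lemma tsum_abs_sqrtCoeff_mul_rpow_le {ε υ : ℝ} (hε0 : 0 < ε) (hε3 : ε ≤ 3) (hυ0 : 0 ≤ υ)
    (hυ : υ ≤ 1 / 2) :
    ∑' m : ℕ, |sqrtCoeff ε m| * (m : ℝ) ^ (1 + υ) ≤ 2 * √π * ε ^ (-(1 / 2 + υ)) := by
  have hsqrt : √(1 + ε) ≤ 2 := (sqrt_le_left zero_le_two).2 (by linarith)
  rw [(summable_abs_sqrtCoeff_mul_rpow hε0 hυ).tsum_eq_zero_add]
  calc |sqrtCoeff ε 0| * ((0 : ℕ) : ℝ) ^ (1 + υ) +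
        ∑' m : ℕ, |sqrtCoeff ε (m + 1)| * ((m + 1 : ℕ) : ℝ) ^ (1 + υ)
      ≤ 0 + ∑' m : ℕ, √(1 + ε) / 2 * (((m : ℝ) + 1) ^ (υ - 1 / 2) * (1 + ε)⁻¹ ^ (m + 1)) := by
        refine add_le_add (by rw [Nat.cast_zero, zero_rpow (by linarith), mul_zero]) ?_
        exact Summable.tsum_le_tsum (abs_sqrtCoeff_succ_mul_rpow_le (by linarith))
          ((summable_nat_add_iff 1).2 (summable_abs_sqrtCoeff_mul_rpow hε0 hυ))
          ((summable_succ_rpow_mul_inv_one_add_pow hε0 hυ).mul_left _)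
    _ ≤ √(1 + ε) / 2 * (3 * ε⁻¹ ^ (υ + 1 / 2)) := by
        rw [zero_add, tsum_mul_left]
        gcongr
        exact tsum_succ_rpow_mul_inv_one_add_pow_le hε0 hυ0 hυ
    _ ≤ 2 * √π * ε ^ (-(1 / 2 + υ)) := by
        rw [inv_rpow hε0.le, ← rpow_neg hε0.le, add_comm υ]
        have := three_le_two_mul_sqrt_pi
        have : 0 < ε ^ (-(1 / 2 + υ)) := rpow_pos_of_pos hε0 _
        nlinarith

section Operators

variable {ι 𝕜 E : Type*} [NontriviallyNormedField 𝕜] [NormedAddCommGroup E] [NormedSpace 𝕜 E]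

lemma norm_pow_apply_le_of_norm_le_one {S : E →L[𝕜] E} (hS : ‖S‖ ≤ 1) (m : ℕ) (v : E) :
    ‖(S ^ m) v‖ ≤ ‖v‖ := by
  induction m with
  | zero => simp
  | succ m ih =>
    rw [pow_succ']
    exact (S.le_opNorm _).trans ((mul_le_of_le_one_left (norm_nonneg _) hS).trans ih)

lemma summable_norm_smul_pow_apply {c : ℕ → 𝕜} (hc : Summable fun m => ‖c m‖)
    {S : E →L[𝕜] E} (hS : ‖S‖ ≤ 1) (u : E) : Summable fun m => ‖c m • (S ^ m) u‖ :=
  (hc.mul_right ‖u‖).of_nonneg_of_le (fun _ => norm_nonneg _) fun m => by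
    rw [norm_smul]
    gcongr
    exact norm_pow_apply_le_of_norm_le_one hS m u

lemma norm_tsum_smul_sub_tsum_smul_le [CompleteSpace E] {c : ι → 𝕜} {x y : ι → E} {b : ι → ℝ}
    (hx : Summable fun i => ‖c i • x i‖) (hy : Summable fun i => ‖c i • y i‖) (hb : Summable b)
    (h : ∀ i, ‖c i‖ * ‖x i - y i‖ ≤ b i) :
    ‖∑' i, c i • x i - ∑' i, c i • y i‖ ≤ ∑' i, b i := by
  rw [← hx.of_norm.tsum_sub hy.of_norm]
  refine tsum_of_norm_bounded hb.hasSum fun i => ?_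
  rw [← smul_sub, norm_smul]
  exact h i

end Operators

/-- Deterministic core of the consistency of the square root of the ε-perturbed
graph Laplacian: the polynomially weighted power consistency
`‖Sᵐu - Tᵐu‖ ≤ m^{1+υ}δ` between two contractions is transferred to the binomial
series for `√((1+ε)I - ·)` at the cost of a factor `2√π ε^{-(1/2+υ)}`. -/
theorem sqrt_perturbed_consistency
    {E : Type*} [NormedAddCommGroup E] [NormedSpace ℂ E] [CompleteSpace E]
    (S T : E →L[ℂ] E) (hS : ‖S‖ ≤ 1) (hT : ‖T‖ ≤ 1)
    (u : E) (δ : ℝ) (hδ : 0 ≤ δ)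
    (υ : ℝ) (hυ0 : 0 ≤ υ) (hυ1 : υ < 1 / 2)
    (ε : ℝ) (hε0 : 0 < ε) (hε3 : ε ≤ 3)
    (hpow : ∀ m : ℕ, 1 ≤ m → ‖(S ^ m) u - (T ^ m) u‖ ≤ (m : ℝ) ^ (1 + υ) * δ) :
    Summable (fun m : ℕ =>
      ‖((binomHalf m * (-1 : ℝ) ^ m * (1 + ε) ^ ((1 : ℝ) / 2 - (m : ℝ)) : ℝ) : ℂ)
        • ((S ^ m) u)‖) ∧
    Summable (fun m : ℕ =>
      ‖((binomHalf m * (-1 : ℝ) ^ m * (1 + ε) ^ ((1 : ℝ) / 2 - (m : ℝ)) : ℝ) : ℂ)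
        • ((T ^ m) u)‖) ∧
    ‖sqrtPerturbedSeries ε S u - sqrtPerturbedSeries ε T u‖
      ≤ 2 * Real.sqrt Real.pi * ε ^ (-(1 / 2 + υ)) * δ := by
  have hc : Summable fun m => ‖((sqrtCoeff ε m : ℝ) : ℂ)‖ := by
    simpa only [Complex.norm_real, norm_eq_abs] using summable_abs_sqrtCoeff hε0
  have hSu := summable_norm_smul_pow_apply hc hS u
  have hTu := summable_norm_smul_pow_apply hc hT u
  refine ⟨hSu, hTu, ?_⟩
  have hterm : ∀ m : ℕ, ‖((sqrtCoeff ε m : ℝ) : ℂ)‖ * ‖(S ^ m) u - (T ^ m) u‖ ≤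
      |sqrtCoeff ε m| * (m : ℝ) ^ (1 + υ) * δ := by
    intro m
    rw [Complex.norm_real, norm_eq_abs, mul_assoc]
    refine mul_le_mul_of_nonneg_left ?_ (abs_nonneg _)
    rcases Nat.eq_zero_or_pos m with rfl | hm
    · rw [pow_zero, pow_zero, sub_self, norm_zero]
      positivity
    · exact hpow m hm
  calc ‖sqrtPerturbedSeries ε S u - sqrtPerturbedSeries ε T u‖
      ≤ ∑' m : ℕ, |sqrtCoeff ε m| * (m : ℝ) ^ (1 + υ) * δ :=
        norm_tsum_smul_sub_tsum_smul_le hSu hTu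
          ((summable_abs_sqrtCoeff_mul_rpow hε0 hυ1.le).mul_right δ) hterm
    _ = (∑' m : ℕ, |sqrtCoeff ε m| * (m : ℝ) ^ (1 + υ)) * δ := tsum_mul_right
    _ ≤ 2 * √π * ε ^ (-(1 / 2 + υ)) * δ := by
        gcongr
        exact tsum_abs_sqrtCoeff_mul_rpow_le hε0 hε3 hυ0 hυ1.le
end

section
/- For every real s with 0 ≤ s < 1/2: (i) for every ε > 0, ε^{s + 1/2} · Σ_{m=1}^∞ m^{s − 1/2} (1+ε)^{−m} ≤ Γ(s + 1/2); and (ii) the limit as ε → 0⁺ of ε^{s + 1/2} · Σ_{m=1}^∞ m^{s − 1/2} (1+ε)^{−m} equals Γ(s + 1/2), where Γ denotes the real Gamma function. -/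
open Filter

/-! With `a = s + 1/2 ∈ (0, 1)`, expanding `ε / ((1+ε) e^{εu} - 1)` as a geometric series and
integrating `u^{-a} e^{-(m+1)εu}` term by term against the Gamma integral gives
`Γ(1-a) ε^a Σ (m+1)^{a-1} (1+ε)^{-(m+1)} = ∫₀^∞ u^{-a} ε / ((1+ε) e^{εu} - 1) du`.
Since `e^{εu} ≥ 1 + εu`, the kernel is at most `1/(1+u)`, its limit as `ε → 0⁺`; so the bound and
the limit follow, by monotonicity and dominated convergence, from
`∫₀^∞ u^{-a} / (1+u) du = Γ(1-a) Γ(a)`, which is Tonelli applied to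
`1/(1+u) = ∫₀^∞ e^{-(1+u)t} dt`. Working with lower Lebesgue integrals in `ℝ≥0∞` removes all
integrability side conditions. -/

open MeasureTheory Real Set
open scoped ENNReal Topology

lemma lintegral_ofReal_mul_rpow_mul_exp_neg_mul {K q c : ℝ} (hK : 0 ≤ K) (hq : 0 < q)
    (hc : 0 < c) :
    ∫⁻ t in Ioi 0, ENNReal.ofReal (K * (t ^ (q - 1) * exp (-(c * t)))) =
      ENNReal.ofReal (K * ((1 / c) ^ q * Gamma q)) := by
  have hint : IntegrableOn (fun t : ℝ => t ^ (q - 1) * exp (-(c * t))) (Ioi 0) := by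
    simpa using integrableOn_rpow_mul_exp_neg_mul_rpow (by linarith : -1 < q - 1) one_pos hc
  rw [← ofReal_integral_eq_lintegral_ofReal (hint.const_mul K), integral_const_mul,
    integral_rpow_mul_exp_neg_mul_Ioi hq hc]
  filter_upwards [ae_restrict_mem measurableSet_Ioi] with t (ht : 0 < t)
  positivity

lemma rpow_neg_natCast_add_one {x : ℝ} (hx : 0 ≤ x) (m : ℕ) :
    x ^ (-((m : ℝ) + 1)) = x⁻¹ ^ (m + 1) := by
  rw [rpow_neg hx, inv_pow, ← rpow_natCast]; push_cast; rfl

noncomputable def polylogKernel (ε u : ℝ) : ℝ := ε / ((1 + ε) * exp (ε * u) - 1)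

lemma mul_one_add_le_one_add_mul_exp_sub_one {ε u : ℝ} (hε : 0 ≤ ε) (hu : 0 ≤ u) :
    ε * (1 + u) ≤ (1 + ε) * exp (ε * u) - 1 := by
  nlinarith [add_one_le_exp (ε * u), mul_nonneg hε hu]

lemma polylogKernel_le {ε u : ℝ} (hε : 0 < ε) (hu : 0 ≤ u) : polylogKernel ε u ≤ (1 + u)⁻¹ := by
  have h := mul_one_add_le_one_add_mul_exp_sub_one hε.le hu
  rw [polylogKernel, div_le_iff₀ ((mul_pos hε (by linarith)).trans_le h), ← div_eq_inv_mul, le_div_iff₀ (by linarith)]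
  linarith

lemma hasSum_polylogKernel {ε u : ℝ} (hε : 0 < ε) (hu : 0 ≤ u) :
    HasSum (fun m : ℕ => ε * (1 + ε) ^ (-((m : ℝ) + 1)) * exp (-((m + 1) * ε * u)))
      (polylogKernel ε u) := by
  have hD : 0 < (1 + ε) * exp (ε * u) - 1 :=
    (mul_pos hε (by linarith)).trans_le (mul_one_add_le_one_add_mul_exp_sub_one hε.le hu)
  set r := ((1 + ε) * exp (ε * u))⁻¹
  have hr1 : r < 1 := inv_lt_one_of_one_lt₀ (by linarith)
  have hterm : ∀ m : ℕ,
      ε * (1 + ε) ^ (-((m : ℝ) + 1)) * exp (-((m + 1) * ε * u)) = ε * r * r ^ m := by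
    intro m
    rw [rpow_neg_natCast_add_one (by positivity),
      show -((m + 1) * ε * u) = ((m + 1 : ℕ) : ℝ) * -(ε * u) by push_cast; ring,
      exp_nat_mul, exp_neg, mul_assoc, ← mul_pow, ← mul_inv, pow_succ']
    ring
  have hsum : polylogKernel ε u = ε * r * (1 - r)⁻¹ := by
    unfold polylogKernel r
    field_simp
  simpa only [hterm, hsum] using (hasSum_geometric_of_lt_one (by positivity) hr1).mul_left (ε * r)

lemma rpow_neg_mul_polylogKernel_le (a : ℝ) {ε u : ℝ} (hε : 0 < ε) (hu : 0 < u) :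
    u ^ (-a) * polylogKernel ε u ≤ u ^ (-a) * (1 + u)⁻¹ :=
  mul_le_mul_of_nonneg_left (polylogKernel_le hε hu.le) (by positivity)

lemma tendsto_polylogKernel {u : ℝ} (hu : 1 + u ≠ 0) :
    Tendsto (fun ε => polylogKernel ε u) (𝓝[>] 0) (𝓝 (1 + u)⁻¹) := by
  have hD : HasDerivAt (fun ε : ℝ => (1 + ε) * exp (ε * u) - 1) (1 + u) 0 := by
    simpa using (((hasDerivAt_id (0 : ℝ)).const_add 1).mul
      (hasDerivAt_mul_const u).exp).sub_const 1
  have hslope := (hasDerivAt_iff_tendsto_slope.1 hD).mono_left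
    (nhdsWithin_mono _ fun x (hx : 0 < x) => hx.ne')
  refine (hslope.inv₀ hu).congr' (Eventually.of_forall fun ε => ?_)
  simp [slope_def_field, polylogKernel]

lemma lintegral_rpow_neg_mul_polylogKernel {a ε : ℝ} (ha : a < 1) (hε : 0 < ε) :
    ∫⁻ u in Ioi 0, ENNReal.ofReal (u ^ (-a) * polylogKernel ε u) =
      ENNReal.ofReal (Gamma (1 - a) *
        (ε ^ a * ∑' m : ℕ, ((m : ℝ) + 1) ^ (a - 1) * (1 + ε) ^ (-((m : ℝ) + 1)))) := by
  have hsummable :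
      Summable fun m : ℕ => ((m : ℝ) + 1) ^ (a - 1) * (1 + ε) ^ (-((m : ℝ) + 1)) := by
    have hq : (1 + ε)⁻¹ < 1 := inv_lt_one_of_one_lt₀ (by linarith)
    refine .of_nonneg_of_le (fun m => by positivity) (fun m => ?_)
      ((summable_geometric_of_lt_one (by positivity) hq).mul_left (1 + ε)⁻¹)
    rw [rpow_neg_natCast_add_one (by positivity), ← pow_succ']
    exact mul_le_of_le_one_left (by positivity)
      (rpow_le_one_of_one_le_of_nonpos (by linarith [m.cast_nonneg (α := ℝ)]) (by linarith))
  calc ∫⁻ u in Ioi 0, ENNReal.ofReal (u ^ (-a) * polylogKernel ε u)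
      = ∫⁻ u in Ioi 0, ∑' m : ℕ, ENNReal.ofReal (ε * (1 + ε) ^ (-((m : ℝ) + 1)) *
          (u ^ ((1 - a) - 1) * exp (-((m + 1) * ε * u)))) := by
        refine setLIntegral_congr_fun measurableSet_Ioi fun u (hu : 0 < u) => ?_
        have h : HasSum (fun m : ℕ => ε * (1 + ε) ^ (-((m : ℝ) + 1)) *
            (u ^ ((1 - a) - 1) * exp (-((m + 1) * ε * u)))) (u ^ (-a) * polylogKernel ε u) := by
          refine ((hasSum_polylogKernel hε hu.le).mul_left (u ^ (-a))).congr_fun fun m => ?_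
          rw [sub_sub_cancel_left]
          ring
        rw [← ENNReal.ofReal_tsum_of_nonneg (fun m => by positivity) h.summable, h.tsum_eq]
    _ = ∑' m : ℕ, ∫⁻ u in Ioi 0, ENNReal.ofReal (ε * (1 + ε) ^ (-((m : ℝ) + 1)) *
          (u ^ ((1 - a) - 1) * exp (-((m + 1) * ε * u)))) :=
        lintegral_tsum fun m => by fun_prop
    _ = ∑' m : ℕ, ENNReal.ofReal (Gamma (1 - a) * ε ^ a *
          (((m : ℝ) + 1) ^ (a - 1) * (1 + ε) ^ (-((m : ℝ) + 1)))) := by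
        congr with m
        rw [lintegral_ofReal_mul_rpow_mul_exp_neg_mul (by positivity) (by linarith) (by positivity)]
        have hm : (0 : ℝ) < m + 1 := by positivity
        rw [one_div, inv_rpow (by positivity), ← rpow_neg (by positivity), neg_sub,
          mul_rpow hm.le hε.le, rpow_sub_one hε.ne']
        field_simp
    _ = _ := by
        rw [← ENNReal.ofReal_tsum_of_nonneg (fun m => by positivity) (hsummable.mul_left _),
          tsum_mul_left, mul_assoc]

lemma lintegral_rpow_neg_mul_inv_one_add {a : ℝ} (ha0 : 0 < a) (ha1 : a < 1) :
    ∫⁻ u in Ioi 0, ENNReal.ofReal (u ^ (-a) * (1 + u)⁻¹) =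
      ENNReal.ofReal (Gamma (1 - a) * Gamma a) := by
  calc ∫⁻ u in Ioi 0, ENNReal.ofReal (u ^ (-a) * (1 + u)⁻¹)
      = ∫⁻ u in Ioi 0, ∫⁻ t in Ioi 0,
          ENNReal.ofReal (u ^ (-a) * (t ^ ((1 : ℝ) - 1) * exp (-((1 + u) * t)))) := by
        refine setLIntegral_congr_fun measurableSet_Ioi fun u (hu : 0 < u) => ?_
        rw [lintegral_ofReal_mul_rpow_mul_exp_neg_mul (by positivity) one_pos (by positivity)]
        simp
    _ = ∫⁻ t in Ioi 0, ∫⁻ u in Ioi 0,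
          ENNReal.ofReal (u ^ (-a) * (t ^ ((1 : ℝ) - 1) * exp (-((1 + u) * t)))) :=
        lintegral_lintegral_swap (by fun_prop)
    _ = ∫⁻ t in Ioi 0, ENNReal.ofReal (Gamma (1 - a) * (t ^ (a - 1) * exp (-(1 * t)))) := by
        refine setLIntegral_congr_fun measurableSet_Ioi fun t (ht : 0 < t) => ?_
        have h := lintegral_ofReal_mul_rpow_mul_exp_neg_mul (exp_pos (-t)).le
          (by linarith : 0 < 1 - a) ht
        have hsplit : ∀ u : ℝ, u ^ (-a) * (t ^ ((1 : ℝ) - 1) * exp (-((1 + u) * t))) =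
            exp (-t) * (u ^ ((1 - a) - 1) * exp (-(t * u))) := fun u => by
          rw [sub_self, rpow_zero, sub_sub_cancel_left,
            show -((1 + u) * t) = -t + -(t * u) by ring, exp_add]
          ring
        simp_rw [hsplit, h, one_div, inv_rpow ht.le, ← rpow_neg ht.le, neg_sub, one_mul]
        ring_nf
    _ = ENNReal.ofReal (Gamma (1 - a) * Gamma a) := by
        rw [lintegral_ofReal_mul_rpow_mul_exp_neg_mul (by positivity) ha0 one_pos]
        simp

lemma tendsto_lintegral_rpow_neg_mul_polylogKernel {a : ℝ} (ha0 : 0 < a) (ha1 : a < 1) :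
    Tendsto (fun ε => ∫⁻ u in Ioi 0, ENNReal.ofReal (u ^ (-a) * polylogKernel ε u)) (𝓝[>] 0)
      (𝓝 (∫⁻ u in Ioi 0, ENNReal.ofReal (u ^ (-a) * (1 + u)⁻¹))) := by
  refine tendsto_lintegral_filter_of_dominated_convergence _
    (Eventually.of_forall fun ε => by unfold polylogKernel; fun_prop) ?_
    (by rw [lintegral_rpow_neg_mul_inv_one_add ha0 ha1]; exact ENNReal.ofReal_ne_top) ?_
  · filter_upwards [self_mem_nhdsWithin] with ε (hε : 0 < ε)
    filter_upwards [ae_restrict_mem measurableSet_Ioi] with u (hu : 0 < u)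
    exact ENNReal.ofReal_le_ofReal (rpow_neg_mul_polylogKernel_le a hε hu)
  · filter_upwards [ae_restrict_mem measurableSet_Ioi] with u (hu : 0 < u)
    exact ENNReal.tendsto_ofReal ((tendsto_polylogKernel (by positivity)).const_mul _)

/-- Polylogarithm estimate: for `0 ≤ s < 1/2`, the quantity
`ε^{s+1/2} Σ_{m≥1} m^{s-1/2} (1+ε)^{-m}` is bounded by `Γ(s+1/2)` for all `ε > 0`
and converges to `Γ(s+1/2)` as `ε → 0⁺`. -/
theorem polylog_gamma_estimate (s : ℝ) (hs0 : 0 ≤ s) (hs1 : s < 1 / 2) :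
    (∀ ε : ℝ, 0 < ε →
      ε ^ (s + 1 / 2) * ∑' m : ℕ, ((m : ℝ) + 1) ^ (s - 1 / 2) * (1 + ε) ^ (-((m : ℝ) + 1))
        ≤ Real.Gamma (s + 1 / 2)) ∧
    Tendsto
      (fun ε : ℝ =>
        ε ^ (s + 1 / 2) * ∑' m : ℕ, ((m : ℝ) + 1) ^ (s - 1 / 2) * (1 + ε) ^ (-((m : ℝ) + 1)))
      (nhdsWithin 0 (Set.Ioi 0)) (nhds (Real.Gamma (s + 1 / 2))) := by
  set a := s + 1 / 2 with ha
  have ha0 : 0 < a := by positivity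
  have ha1 : a < 1 := by linarith
  have hΓ : 0 < Gamma (1 - a) := Gamma_pos_of_pos (by linarith)
  rw [show s - 1 / 2 = a - 1 by ring]
  set S := fun ε : ℝ => ε ^ a * ∑' m : ℕ, ((m : ℝ) + 1) ^ (a - 1) * (1 + ε) ^ (-((m : ℝ) + 1))
  have hrep := fun ε (hε : 0 < ε) => lintegral_rpow_neg_mul_polylogKernel ha1 hε
  have hbeta := lintegral_rpow_neg_mul_inv_one_add ha0 ha1
  refine ⟨fun ε hε => ?_, ?_⟩
  · have h : ENNReal.ofReal (Gamma (1 - a) * S ε) ≤ ENNReal.ofReal (Gamma (1 - a) * Gamma a) := by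
      rw [← hrep ε hε, ← hbeta]
      exact setLIntegral_mono' measurableSet_Ioi fun u (hu : 0 < u) =>
        ENNReal.ofReal_le_ofReal (rpow_neg_mul_polylogKernel_le a hε hu)
    exact le_of_mul_le_mul_left ((ENNReal.ofReal_le_ofReal_iff (by positivity)).1 h) hΓ
  · have h := tendsto_lintegral_rpow_neg_mul_polylogKernel ha0 ha1
    rw [hbeta] at h
    have h' := ((ENNReal.tendsto_toReal ENNReal.ofReal_ne_top).comp h).const_mul (Gamma (1 - a))⁻¹
    rw [ENNReal.toReal_ofReal (by positivity), inv_mul_cancel_left₀ hΓ.ne'] at h'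
    refine h'.congr' ?_
    filter_upwards [self_mem_nhdsWithin] with ε (hε : 0 < ε)
    have hS : 0 ≤ S ε := mul_nonneg (by positivity) (tsum_nonneg fun m => by positivity)
    rw [Function.comp_apply, hrep ε hε, ENNReal.toReal_ofReal (by positivity),
      inv_mul_cancel_left₀ hΓ.ne']
end

section
/- Let n ≥ 1, let φ : ℝⁿ → ℂ be a Schwartz function, and for each s ∈ (0, 1] define H_s : ℝⁿ → ℂ by H_s(ξ) := ∫_{ℝⁿ} e^{i s ⟨z, ξ⟩} φ(z) dz. Then for every order k ∈ ℕ there is a constant C_k > 0 such that for all s ∈ (0, 1] and all ξ ∈ ℝⁿ, ‖ (k-th iterated derivative of H_s at ξ) ‖ ≤ C_k (1 + |ξ|)^{−k}. (In other words, the family {H_s : s ∈ (0,1]} is bounded in the symbol class S⁰, i.e. each ξ-derivative of order k decays like ⟨ξ⟩^{−k} uniformly in s.) -/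
/-!
Up to the rescaling `ξ ↦ -(s / 2π) • ξ`, `H_s` is the Fourier transform `𝓕φ`, itself a Schwartz
function. The chain rule produces a factor `|c| ^ k` with `c = -(s / 2π)`, and since `|c| ≤ 1`,
`|c| (1 + ‖ξ‖) ≤ 1 + ‖c • ξ‖`; so the Schwartz decay of `𝓕φ` at `c • ξ` absorbs that factor and
gives decay in `ξ` that does not depend on `s`.
-/

open MeasureTheory Real FourierTransform

namespace SchwartzMap

variable {E F : Type*} [NormedAddCommGroup E] [NormedSpace ℝ E]
  [NormedAddCommGroup F] [NormedSpace ℝ F]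

theorem one_add_pow_mul_norm_iteratedFDeriv_comp_smul_le (ψ : 𝓢(E, F)) (k : ℕ) {c : ℝ}
    (hc : |c| ≤ 1) (ξ : E) :
    (1 + ‖ξ‖) ^ k * ‖iteratedFDeriv ℝ k (fun x ↦ ψ (c • x)) ξ‖ ≤
      2 ^ k * (Finset.Iic (k, k)).sup (fun m ↦ SchwartzMap.seminorm ℝ m.1 m.2) ψ := by
  rw [iteratedFDeriv_comp_const_smul c (ψ.smooth k), norm_smul, norm_pow, Real.norm_eq_abs]
  calc (1 + ‖ξ‖) ^ k * (|c| ^ k * ‖iteratedFDeriv ℝ k ψ (c • ξ)‖)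
      = (|c| * (1 + ‖ξ‖)) ^ k * ‖iteratedFDeriv ℝ k ψ (c • ξ)‖ := by rw [mul_pow]; ring
    _ ≤ (1 + ‖c • ξ‖) ^ k * ‖iteratedFDeriv ℝ k ψ (c • ξ)‖ := by
        rw [norm_smul, Real.norm_eq_abs]
        gcongr
        linarith
    _ ≤ _ := one_add_le_sup_seminorm_apply (m := (k, k)) le_rfl le_rfl ψ (c • ξ)

end SchwartzMap

theorem integral_exp_mul_inner_mul_eq_fourier {V : Type*} [NormedAddCommGroup V]
    [InnerProductSpace ℝ V] [MeasurableSpace V] [BorelSpace V] [FiniteDimensional ℝ V]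
    (f : V → ℂ) (s : ℝ) (ξ : V) :
    ∫ z, Complex.exp (Complex.I * ((s * inner ℝ z ξ : ℝ) : ℂ)) * f z =
      𝓕 f (-(s / (2 * π)) • ξ) := by
  rw [Real.fourier_eq']
  congr 1 with z
  rw [real_inner_smul_right, smul_eq_mul, mul_comm Complex.I]
  congr 4
  field_simp [Real.pi_ne_zero]

theorem averaging_symbol_class_zero_general (n : ℕ)
    (φ : SchwartzMap (EuclideanSpace ℝ (Fin n)) ℂ) :
    ∀ k : ℕ, ∃ C : ℝ, 0 < C ∧ ∀ s : ℝ, 0 < s → s ≤ 1 →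
      ∀ ξ : EuclideanSpace ℝ (Fin n),
        ‖iteratedFDeriv ℝ k
            (fun ξ' : EuclideanSpace ℝ (Fin n) =>
              ∫ z : EuclideanSpace ℝ (Fin n),
                Complex.exp (Complex.I * ((s * (inner ℝ z ξ' : ℝ) : ℝ) : ℂ)) * φ z) ξ‖
          ≤ C * (1 + ‖ξ‖) ^ (-(k : ℝ)) := by
  intro k
  set S := 2 ^ k * (Finset.Iic (k, k)).sup (fun m ↦ SchwartzMap.seminorm ℝ m.1 m.2) (𝓕 φ)
  have hS : 0 ≤ S := by positivity
  refine ⟨S + 1, by positivity, fun s hs hs1 ξ ↦ ?_⟩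
  have hc : |-(s / (2 * π))| ≤ 1 := by
    rw [abs_neg, abs_of_pos (by positivity), div_le_one (by positivity)]
    linarith [Real.pi_gt_three]
  have hH : (fun ξ' ↦ ∫ z, Complex.exp (Complex.I * ((s * inner ℝ z ξ' : ℝ) : ℂ)) * φ z) =
      fun ξ' ↦ 𝓕 φ (-(s / (2 * π)) • ξ') := by
    ext ξ'
    rw [integral_exp_mul_inner_mul_eq_fourier, SchwartzMap.fourier_coe]
  have hξ : 0 < (1 + ‖ξ‖) ^ k := by positivity
  rw [hH, Real.rpow_neg (by positivity), Real.rpow_natCast, ← div_eq_mul_inv,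
    le_div_iff₀ hξ, mul_comm]
  exact (SchwartzMap.one_add_pow_mul_norm_iteratedFDeriv_comp_smul_le _ k hc ξ).trans
    (by linarith)

/-- Uniform `S⁰` symbol estimate for the family of oscillatory integrals
`H_s(ξ) := ∫ e^{is⟨z,ξ⟩} φ(z) dz`, `s ∈ (0,1]`, with `φ` Schwartz: every
`ξ`-derivative of order `k` decays like `(1+|ξ|)^{-k}` uniformly in `s`. -/
theorem averaging_symbol_class_zero (n : ℕ) (hn : 0 < n)
    (φ : SchwartzMap (EuclideanSpace ℝ (Fin n)) ℂ) :
    ∀ k : ℕ, ∃ C : ℝ, 0 < C ∧ ∀ s : ℝ, 0 < s → s ≤ 1 →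
      ∀ ξ : EuclideanSpace ℝ (Fin n),
        ‖iteratedFDeriv ℝ k
            (fun ξ' : EuclideanSpace ℝ (Fin n) =>
              ∫ z : EuclideanSpace ℝ (Fin n),
                Complex.exp (Complex.I * ((s * (inner ℝ z ξ' : ℝ) : ℝ) : ℂ)) * φ z) ξ‖
          ≤ C * (1 + ‖ξ‖) ^ (-(k : ℝ)) :=
  averaging_symbol_class_zero_general n φ
end

section
/- Let n ≥ 1, let φ : ℝⁿ → ℂ be an even Schwartz function (φ(−z) = φ(z) for all z), and for each s ∈ (0, 1] define L_s : ℝⁿ → ℂ by L_s(ξ) := s^{−2} ( ∫_{ℝⁿ} φ(z) dz − ∫_{ℝⁿ} e^{i s ⟨z, ξ⟩} φ(z) dz ). Then for every order k ∈ ℕ there is a constant C_k > 0 such that for all s ∈ (0, 1] and all ξ ∈ ℝⁿ, ‖ (k-th iterated derivative of L_s at ξ) ‖ ≤ C_k (1 + |ξ|)^{2 − k}. (In other words, the family {L_s : s ∈ (0,1]} is bounded in the symbol class S², i.e. each ξ-derivative of order k is bounded by ⟨ξ⟩^{2−k} uniformly in s.) -/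
/-!
Writing `ψ = 𝓕 φ`, the symbol is `s⁻² (ψ 0 - ψ (a • ξ))` with `a = -s / (2π)`, and `ψ` is an even
Schwartz function, so `Dψ 0 = 0`. For `k = 0, 1` Taylor's formula gives `‖ψ 0 - ψ w‖ ≲ ‖w‖²` and
`‖Dψ w‖ ≲ ‖w‖`, which absorb the factor `s⁻²`. For `k ≥ 2` the chain rule contributes `a ^ k`; the
Schwartz decay `(1 + ‖w‖) ^ (k - 2) ‖D^k ψ w‖ ≲ 1` at `w = a • ξ`, together with
`|a| (1 + ‖ξ‖) ≤ 1 + ‖a • ξ‖`, turns the excess `a ^ (k - 2)` into `(1 + ‖ξ‖) ^ (2 - k)`.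
-/

open MeasureTheory FourierTransform Real
open scoped SchwartzMap

section Calculus

variable {E F : Type*} [NormedAddCommGroup E] [NormedSpace ℝ E]
  [NormedAddCommGroup F] [NormedSpace ℝ F]

theorem Function.Even.fderiv_zero {f : E → F} (he : f.Even) (hf : DifferentiableAt ℝ f 0) :
    fderiv ℝ f 0 = 0 := by
  have hneg : HasFDerivAt (fun x => f (-x)) (-fderiv ℝ f 0) 0 := by
    have h0 : HasFDerivAt f (fderiv ℝ f 0) (-0) := by rw [neg_zero]; exact hf.hasFDerivAt
    simpa [Function.comp_def] using h0.comp (0 : E) (hasFDerivAt_id (0 : E)).neg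
  rw [funext he] at hneg
  have h := hf.hasFDerivAt.unique hneg
  linear_combination (norm := module) (1 / 2 : ℝ) • h

theorem norm_sub_le_of_norm_fderiv_le_mul_norm {f : E → F} {M : ℝ} (hM : 0 ≤ M)
    (hf : Differentiable ℝ f) (hbound : ∀ y, ‖fderiv ℝ f y‖ ≤ M * ‖y‖) (x : E) :
    ‖f x - f 0‖ ≤ M * ‖x‖ ^ 2 := by
  have hball : ∀ y ∈ Metric.closedBall (0 : E) ‖x‖, ‖fderiv ℝ f y‖ ≤ M * ‖x‖ := fun y hy =>
    (hbound y).trans (by gcongr; simpa using hy)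
  simpa [sq, mul_assoc] using (convex_closedBall (0 : E) ‖x‖).norm_image_sub_le_of_norm_fderiv_le
    (fun y _ => hf y) hball (Metric.mem_closedBall_self (norm_nonneg x)) (by simp)

theorem norm_iteratedFDeriv_const_sub_comp_smul {f : E → F} {k : ℕ} (hf : ContDiff ℝ k f)
    (hk : k ≠ 0) (c : F) (a : ℝ) (ξ : E) :
    ‖iteratedFDeriv ℝ k (fun ξ => c - f (a • ξ)) ξ‖ = |a| ^ k * ‖iteratedFDeriv ℝ k f (a • ξ)‖ := by
  have hcomp : ContDiff ℝ k (fun ξ => f (a • ξ)) := hf.comp (contDiff_const_smul a)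
  rw [fun_iteratedFDeriv_sub_apply contDiff_const.contDiffAt hcomp.contDiffAt,
    iteratedFDeriv_const_of_ne hk, iteratedFDeriv_comp_const_smul a hf]
  simp [norm_smul]

theorem le_mul_rpow_two_sub_of_mul_pow_le {x t C : ℝ} {k : ℕ} (ht : 0 < t)
    (h : x * t ^ k ≤ C * t ^ 2) : x ≤ C * t ^ ((2 : ℝ) - k) := by
  rwa [rpow_sub ht, rpow_natCast, rpow_two, mul_div_assoc', le_div_iff₀ (by positivity)]

end Calculus

namespace SchwartzMap

variable {E F : Type*} [NormedAddCommGroup E] [NormedSpace ℝ E]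
  [NormedAddCommGroup F] [NormedSpace ℝ F]

theorem exists_norm_fderiv_le_and_norm_sub_le_of_even (ψ : 𝓢(E, F)) (hψ : Function.Even ψ) :
    ∃ M, 0 ≤ M ∧ ∀ x, ‖fderiv ℝ ψ x‖ ≤ M * ‖x‖ ∧ ‖ψ x - ψ 0‖ ≤ M * ‖x‖ ^ 2 := by
  obtain ⟨M, hM, hdecay⟩ := ψ.decay 0 2
  have hD : Differentiable ℝ (fderiv ℝ ψ) :=
    ((ψ.smooth 2).fderiv_right (m := 1) (by norm_num)).differentiable one_ne_zero
  have hD2 : ∀ x, ‖fderiv ℝ (fderiv ℝ ψ) x‖ ≤ M := fun x => by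
    simpa [← norm_iteratedFDeriv_one, norm_iteratedFDeriv_fderiv] using hdecay x
  have hD1 : ∀ x, ‖fderiv ℝ ψ x‖ ≤ M * ‖x‖ := fun x => by
    simpa [(hψ.fderiv_zero ψ.differentiableAt)] using
      convex_univ.norm_image_sub_le_of_norm_fderiv_le (fun y _ => hD y) (fun y _ => hD2 y)
        (Set.mem_univ 0) (Set.mem_univ x)
  exact ⟨M, hM.le, fun x => ⟨hD1 x, norm_sub_le_of_norm_fderiv_le_mul_norm hM.le
    ψ.differentiable hD1 x⟩⟩

theorem norm_iteratedFDeriv_sub_comp_smul_mul_le (ψ : 𝓢(E, F)) (hψ : Function.Even ψ) (k : ℕ) :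
    ∃ C, 0 < C ∧ ∀ a : ℝ, |a| ≤ 1 → ∀ ξ : E,
      ‖iteratedFDeriv ℝ k (fun ξ => ψ 0 - ψ (a • ξ)) ξ‖ * (1 + ‖ξ‖) ^ k
        ≤ C * a ^ 2 * (1 + ‖ξ‖) ^ 2 := by
  obtain ⟨M, hM, hψM⟩ := ψ.exists_norm_fderiv_le_and_norm_sub_le_of_even hψ
  have hnorm_smul (a : ℝ) (ξ : E) : ‖a • ξ‖ = |a| * ‖ξ‖ := by rw [norm_smul, Real.norm_eq_abs]
  rcases k with _ | _ | m
  · refine ⟨M + 1, by positivity, fun a _ ξ => ?_⟩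
    calc ‖iteratedFDeriv ℝ 0 (fun ξ => ψ 0 - ψ (a • ξ)) ξ‖ * (1 + ‖ξ‖) ^ 0
        = ‖ψ (a • ξ) - ψ 0‖ := by simp [norm_sub_rev]
      _ ≤ M * ‖a • ξ‖ ^ 2 := (hψM _).2
      _ = M * a ^ 2 * ‖ξ‖ ^ 2 := by rw [hnorm_smul, mul_pow, sq_abs, mul_assoc]
      _ ≤ (M + 1) * a ^ 2 * (1 + ‖ξ‖) ^ 2 := by gcongr <;> linarith [norm_nonneg ξ]
  · refine ⟨M + 1, by positivity, fun a _ ξ => ?_⟩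
    calc ‖iteratedFDeriv ℝ 1 (fun ξ => ψ 0 - ψ (a • ξ)) ξ‖ * (1 + ‖ξ‖) ^ 1
        = |a| * ‖fderiv ℝ ψ (a • ξ)‖ * (1 + ‖ξ‖) := by
          rw [norm_iteratedFDeriv_const_sub_comp_smul (ψ.smooth 1) one_ne_zero,
            norm_iteratedFDeriv_one, pow_one, pow_one]
      _ ≤ |a| * (M * (|a| * ‖ξ‖)) * (1 + ‖ξ‖) := by
          gcongr; exact hnorm_smul a ξ ▸ (hψM _).1
      _ = M * a ^ 2 * ‖ξ‖ * (1 + ‖ξ‖) := by rw [← sq_abs a]; ring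
      _ ≤ (M + 1) * a ^ 2 * (1 + ‖ξ‖) * (1 + ‖ξ‖) := by gcongr <;> linarith [norm_nonneg ξ]
      _ = (M + 1) * a ^ 2 * (1 + ‖ξ‖) ^ 2 := by ring
  · set D := 2 ^ m * (Finset.Iic (m, m + 2)).sup (fun p => SchwartzMap.seminorm ℝ p.1 p.2) ψ
    have hdecay (x : E) : (1 + ‖x‖) ^ m * ‖iteratedFDeriv ℝ (m + 2) ψ x‖ ≤ D :=
      one_add_le_sup_seminorm_apply (m := (m, m + 2)) le_rfl le_rfl ψ x
    refine ⟨D + 1, by positivity, fun a ha ξ => ?_⟩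
    have hscale : |a| * (1 + ‖ξ‖) ≤ 1 + ‖a • ξ‖ := by
      rw [hnorm_smul, mul_add, mul_one]; gcongr
    calc ‖iteratedFDeriv ℝ (m + 2) (fun ξ => ψ 0 - ψ (a • ξ)) ξ‖ * (1 + ‖ξ‖) ^ (m + 2)
        = a ^ 2 * (1 + ‖ξ‖) ^ 2 *
            ((|a| * (1 + ‖ξ‖)) ^ m * ‖iteratedFDeriv ℝ (m + 2) ψ (a • ξ)‖) := by
          rw [norm_iteratedFDeriv_const_sub_comp_smul (ψ.smooth _) (by omega), ← sq_abs a, mul_pow]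
          ring
      _ ≤ a ^ 2 * (1 + ‖ξ‖) ^ 2 * ((1 + ‖a • ξ‖) ^ m * ‖iteratedFDeriv ℝ (m + 2) ψ (a • ξ)‖) := by
          gcongr
      _ ≤ a ^ 2 * (1 + ‖ξ‖) ^ 2 * (D + 1) := by gcongr; linarith [hdecay (a • ξ)]
      _ = (D + 1) * a ^ 2 * (1 + ‖ξ‖) ^ 2 := by ring

end SchwartzMap

namespace Real

variable {V E : Type*} [NormedAddCommGroup V] [InnerProductSpace ℝ V] [MeasurableSpace V]
  [BorelSpace V] [FiniteDimensional ℝ V] [NormedAddCommGroup E] [NormedSpace ℂ E]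

theorem fourier_even {f : V → E} (hf : f.Even) : (𝓕 f).Even := fun w => by
  rw [← fourierInv_eq_fourier_neg, fourierInv_eq_fourier_comp_neg, funext hf]

theorem integral_eq_fourier_zero (f : V → E) : ∫ v, f v = 𝓕 f 0 := by
  simp [fourier_eq]

theorem integral_exp_inner_smul_eq_fourier (f : V → E) (s : ℝ) (ξ : V) :
    ∫ z, Complex.exp (Complex.I * ((s * inner ℝ z ξ : ℝ) : ℂ)) • f z
      = 𝓕 f ((-(s / (2 * π))) • ξ) := by
  rw [fourier_eq']
  congr 1 with z
  rw [inner_smul_right, mul_comm Complex.I]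
  congr 4
  field_simp

end Real

theorem graph_laplacian_symbol_class_two_general (n : ℕ)
    (φ : SchwartzMap (EuclideanSpace ℝ (Fin n)) ℂ)
    (heven : ∀ z : EuclideanSpace ℝ (Fin n), φ (-z) = φ z) :
    ∀ k : ℕ, ∃ C : ℝ, 0 < C ∧ ∀ s : ℝ, 0 < s → s ≤ 1 →
      ∀ ξ : EuclideanSpace ℝ (Fin n),
        ‖iteratedFDeriv ℝ k
            (fun ξ' : EuclideanSpace ℝ (Fin n) =>
              (((s ^ 2)⁻¹ : ℝ) : ℂ) *
                ((∫ z : EuclideanSpace ℝ (Fin n), φ z)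
                  - ∫ z : EuclideanSpace ℝ (Fin n),
                      Complex.exp (Complex.I * ((s * (inner ℝ z ξ' : ℝ) : ℝ) : ℂ)) * φ z)) ξ‖
          ≤ C * (1 + ‖ξ‖) ^ ((2 : ℝ) - (k : ℝ)) := by
  intro k
  set ψ : 𝓢(EuclideanSpace ℝ (Fin n), ℂ) := 𝓕 φ
  have hψ : Function.Even ψ := by rw [SchwartzMap.fourier_coe]; exact fourier_even heven
  obtain ⟨C, hC, hbound⟩ := ψ.norm_iteratedFDeriv_sub_comp_smul_mul_le hψ k
  refine ⟨C, hC, fun s hs hs1 ξ => ?_⟩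
  set a := -(s / (2 * π))
  have hsymbol : (fun ξ' : EuclideanSpace ℝ (Fin n) => (((s ^ 2)⁻¹ : ℝ) : ℂ) *
      ((∫ z, φ z) - ∫ z, Complex.exp (Complex.I * ((s * (inner ℝ z ξ' : ℝ) : ℝ) : ℂ)) * φ z))
      = fun ξ' => (s ^ 2)⁻¹ • (ψ 0 - ψ (a • ξ')) := by
    ext ξ'
    have hexp := integral_exp_inner_smul_eq_fourier (φ : EuclideanSpace ℝ (Fin n) → ℂ) s ξ'
    simp only [smul_eq_mul] at hexp
    rw [hexp, integral_eq_fourier_zero, Complex.real_smul, SchwartzMap.fourier_coe]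
  have ha2 : a ^ 2 ≤ s ^ 2 := by
    rw [neg_sq, div_pow]
    exact div_le_self (by positivity) (by nlinarith [pi_gt_three])
  have ha : |a| ≤ 1 := by
    rw [← sq_le_one_iff_abs_le_one]; nlinarith
  have hsmooth : ContDiff ℝ k (fun ξ' => ψ 0 - ψ (a • ξ')) :=
    contDiff_const.sub ((ψ.smooth k).comp (contDiff_const_smul a))
  rw [hsymbol, iteratedFDeriv_const_smul_apply' hsmooth.contDiffAt, norm_smul, norm_inv, norm_pow,
    norm_of_nonneg hs.le]
  refine le_mul_rpow_two_sub_of_mul_pow_le (by positivity) ?_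
  calc (s ^ 2)⁻¹ * ‖iteratedFDeriv ℝ k (fun ξ' => ψ 0 - ψ (a • ξ')) ξ‖ * (1 + ‖ξ‖) ^ k
      ≤ (s ^ 2)⁻¹ * (C * a ^ 2 * (1 + ‖ξ‖) ^ 2) := by
        rw [mul_assoc]
        exact mul_le_mul_of_nonneg_left (hbound a ha ξ) (by positivity)
    _ ≤ (s ^ 2)⁻¹ * (C * s ^ 2 * (1 + ‖ξ‖) ^ 2) := by gcongr
    _ = C * (1 + ‖ξ‖) ^ 2 := by field_simp

/-- Uniform `S²` symbol estimate for the family of rescaled graph-Laplacian symbols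
`L_s(ξ) := s^{-2}(∫ φ − ∫ e^{is⟨z,ξ⟩} φ(z) dz)`, `s ∈ (0,1]`, with `φ` an even
Schwartz function: every `ξ`-derivative of order `k` is bounded by
`(1+|ξ|)^{2-k}` uniformly in `s`. -/
theorem graph_laplacian_symbol_class_two (n : ℕ) (hn : 0 < n)
    (φ : SchwartzMap (EuclideanSpace ℝ (Fin n)) ℂ)
    (heven : ∀ z : EuclideanSpace ℝ (Fin n), φ (-z) = φ z) :
    ∀ k : ℕ, ∃ C : ℝ, 0 < C ∧ ∀ s : ℝ, 0 < s → s ≤ 1 →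
      ∀ ξ : EuclideanSpace ℝ (Fin n),
        ‖iteratedFDeriv ℝ k
            (fun ξ' : EuclideanSpace ℝ (Fin n) =>
              (((s ^ 2)⁻¹ : ℝ) : ℂ) *
                ((∫ z : EuclideanSpace ℝ (Fin n), φ z)
                  - ∫ z : EuclideanSpace ℝ (Fin n),
                      Complex.exp (Complex.I * ((s * (inner ℝ z ξ' : ℝ) : ℝ) : ℂ)) * φ z)) ξ‖
          ≤ C * (1 + ‖ξ‖) ^ ((2 : ℝ) - (k : ℝ)) :=
  graph_laplacian_symbol_class_two_general n φ heven
end
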